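/- arXiv:2106.13053 — 7 statements merged into one kernel-verified Lean document; each statement's English description precedes it below -/
import Mathlib

section
/- If I is an analytic ideal on ℕ and (α_n) is a strictly decreasing sequence in (0,1/2] converging to 0, then the ideal conv(I,(α_n)) on [0,1] ∩ ℚ is analytic as a subset of the Cantor space 2^{[0,1]∩ℚ}. -/
open Filter Topology Set

/-- The upper-density submeasure `φ(A) = sup_n |A ∩ [0,n]| / (n+1)`. -/
noncomputable def phi (A : Set ℕ) : ℝ :=
  ⨆ n : ℕ, ((A ∩ Set.Iic n).ncard : ℝ) / (n + 1)

/-- The ideal of asymptotic density zero sets. -/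
def densityZero : Set (Set ℕ) :=
  {A | Tendsto (fun n : ℕ => ((A ∩ Set.Iic n).ncard : ℝ) / (n + 1)) atTop (𝓝 0)}

/-- `I` is an ideal on `X` (containing all finite sets, proper). -/
def IsIdeal {X : Type*} (I : Set (Set X)) : Prop :=
  (∀ A ∈ I, ∀ B, B ⊆ A → B ∈ I) ∧ (∀ A ∈ I, ∀ B ∈ I, A ∪ B ∈ I) ∧
    (∀ A : Set X, A.Finite → A ∈ I) ∧ Set.univ ∉ I

/-- `J` is a P⁺-ideal. -/
def IsPPlus {X : Type*} (J : Set (Set X)) : Prop :=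
  ∀ A : ℕ → Set X, (∀ n, A (n + 1) ⊆ A n) → (∀ n, A n ∉ J) →
    ∃ B ∉ J, ∀ n, (B \ A n).Finite

/-- Katětov order. -/
def KatLE {X Y : Type*} (I : Set (Set X)) (J : Set (Set Y)) : Prop :=
  ∃ f : Y → X, ∀ A ∈ I, f ⁻¹' A ∈ J

/-- membership in the class `S` of strictly decreasing null sequences in `(0,1/2]`. -/
def memS (α : ℕ → ℝ) : Prop :=
  (∀ n, 0 < α n) ∧ (∀ n, α n ≤ 1 / 2) ∧ StrictAnti α ∧ Tendsto α atTop (𝓝 0)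

/-- The underlying countable set `[0,1] ∩ ℚ`. -/
abbrev Q01 : Type := ↥(Set.Icc (0 : ℚ) 1)

/-- The real number corresponding to a point of `[0,1] ∩ ℚ`. -/
noncomputable def qr (q : Q01) : ℝ := ((q : ℚ) : ℝ)

/-- The set `S ⊆ [0,1]∩ℚ` converges to `x ∈ ℝ`. -/
def ConvTo (S : Set Q01) (x : ℝ) : Prop :=
  ∀ ε > (0 : ℝ), {q ∈ S | ε ≤ |qr q - x|}.Finite

/-- `S` converges `I`-quickly with respect to `α` to the point `x`. -/
def IQuickTo (I : Set (Set ℕ)) (α : ℕ → ℝ) (S : Set Q01) (x : ℝ) : Prop :=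
  ConvTo S x ∧
    {n : ℕ | ∃ q ∈ S, α (n + 1) ≤ |qr q - x| ∧ |qr q - x| < α n} ∈ I

/-- `S` converges `I`-quickly with respect to `α`. -/
def IQuick (I : Set (Set ℕ)) (α : ℕ → ℝ) (S : Set Q01) : Prop :=
  ∃ x ∈ Set.Icc (0 : ℝ) 1, IQuickTo I α S x

/-- The ideal `conv(I,(α_n))` on `[0,1] ∩ ℚ`. -/
def convQI (I : Set (Set ℕ)) (α : ℕ → ℝ) : Set (Set Q01) :=
  {A | ∃ F : Finset (Set Q01), (∀ S ∈ F, IQuick I α S) ∧ A ⊆ ⋃₀ ↑F}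

/-- The ideal `conv` on `[0,1] ∩ ℚ` generated by convergent sequences. -/
def convIdeal : Set (Set Q01) :=
  {A | ∃ F : Finset (Set Q01),
    (∀ S ∈ F, ∃ x ∈ Set.Icc (0 : ℝ) 1, ConvTo S x) ∧ A ⊆ ⋃₀ ↑F}

/-- Identify a point of Cantor space `2^X` with a subset of `X`. -/
def toSet {X : Type*} (f : X → Bool) : Set X := {x | f x = true}

/-- `Σ⁰ₙ` sets of a topological space: `IsSigma0 1 = open`,
`IsSigma0 (n+1)` = countable unions of complements of `Σ⁰ₙ` sets. -/
def IsSigma0 {X : Type*} [TopologicalSpace X] : ℕ → Set X → Prop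
  | 0, _ => False
  | 1, S => IsOpen S
  | (n + 2), S => ∃ f : ℕ → Set X, (∀ k, IsSigma0 (n + 1) (f k)ᶜ) ∧ S = ⋃ k, f k

/-!
A set lies in `conv(I, α)` iff finitely many `I`-quick sets cover it, so for each number `k` of
covering sets we get the projection of an analytic set of tuples `(A, S₁, …, Sₖ)`, provided the
family of `I`-quick sets is analytic. That family is the projection, along the limit `x`, of the
pairs `(S, x)` with `S → x` (a Borel condition) whose set of met annuli `B(x, αₙ) \ B(x, αₙ₊₁)`
lies in `I`; the map sending `(S, x)` to that set of indices is Borel, and Borel preimages of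
analytic sets are analytic.
-/

open MeasureTheory

-- Typeclass search does not find this instance unaided.
instance Pi.polishSpace_bool {X : Type*} [Countable X] : PolishSpace (X → Bool) :=
  instPolishSpaceOfSeparableSpaceOfIsCompletelyMetrizableSpace

namespace MeasureTheory

variable {X : Type*} [TopologicalSpace X]

theorem AnalyticSet.inter [T2Space X] {s t : Set X} (hs : AnalyticSet s) (ht : AnalyticSet t) :
    AnalyticSet (s ∩ t) := by
  rw [Set.inter_eq_iInter]
  exact AnalyticSet.iInter fun b => b.rec ht hs

theorem AnalyticSet.iInter_of_polishSpace [PolishSpace X] {ι : Type*} [Countable ι]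
    {s : ι → Set X} (hs : ∀ i, AnalyticSet (s i)) : AnalyticSet (⋂ i, s i) := by
  cases isEmpty_or_nonempty ι
  · rw [Set.iInter_of_empty]
    exact isClosed_univ.analyticSet
  · exact AnalyticSet.iInter hs

theorem AnalyticSet.preimage_of_measurable [PolishSpace X] [MeasurableSpace X] [BorelSpace X]
    {Y : Type*} [TopologicalSpace Y] [T2Space Y] [SecondCountableTopology Y] [MeasurableSpace Y]
    [BorelSpace Y] {s : Set Y} (hs : AnalyticSet s) {f : X → Y} (hf : Measurable f) :
    AnalyticSet (f ⁻¹' s) := by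
  obtain ⟨Z, _, _, g, hg, rfl⟩ := analyticSet_iff_exists_polishSpace_range.1 hs
  borelize Z
  have hgraph : MeasurableSet {p : X × Z | f p.1 = g p.2} :=
    measurableSet_eq_fun (hf.comp measurable_fst) (hg.measurable.comp measurable_snd)
  convert hgraph.analyticSet.image_of_continuous continuous_fst
  ext x
  simp [eq_comm]

end MeasureTheory

theorem Measurable.setOf_finite {α ι : Type*} [MeasurableSpace α] [Countable ι]
    {p : ι → α → Prop} (hp : ∀ i, Measurable (p i)) :
    Measurable fun a => {i | p i a}.Finite := by
  have hfin : ∀ a, {i | p i a}.Finite ↔ ∃ F : Finset ι, ∀ i, p i a → i ∈ F := fun a =>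
    ⟨fun h => ⟨h.toFinset, fun i hi => h.mem_toFinset.2 hi⟩,
      fun ⟨F, hF⟩ => F.finite_toSet.subset hF⟩
  simp_rw [hfin]
  exact Measurable.exists fun F => Measurable.forall fun i => (hp i).imp measurable_const

@[simp]
theorem mem_toSet {X : Type*} {f : X → Bool} {x : X} : x ∈ toSet f ↔ f x = true := Iff.rfl

open Classical in
theorem toSet_decide_mem {X : Type*} (A : Set X) : toSet (fun x => decide (x ∈ A)) = A := by
  ext; simp

theorem toSet_surjective {X : Type*} : Function.Surjective (toSet : (X → Bool) → Set X) :=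
  fun A => ⟨_, toSet_decide_mem A⟩

open Classical in
theorem measurable_decide_mem {ι : Type*} :
    Measurable fun (A : Set ι) (i : ι) => decide (i ∈ A) :=
  measurable_pi_lambda _ fun i =>
    (Measurable.of_discrete (f := fun P : Prop => decide P)).comp (measurable_set_mem i)

theorem exists_finset_cover_iff_exists_fin_cover {X : Type*} {𝒜 : Set (Set X)} {A : Set X} :
    (∃ F : Finset (Set X), (∀ S ∈ F, S ∈ 𝒜) ∧ A ⊆ ⋃₀ ↑F) ↔
      ∃ (k : ℕ) (S : Fin k → Set X), (∀ i, S i ∈ 𝒜) ∧ A ⊆ ⋃ i, S i := by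
  classical
  constructor
  · rintro ⟨F, hF𝒜, hAF⟩
    refine ⟨F.toList.length, F.toList.get, fun i => hF𝒜 _ (F.mem_toList.1 (List.get_mem _ _)), ?_⟩
    rw [← Set.sUnion_range, Set.range_list_get]
    simpa only [Finset.mem_toList, Finset.setOfPred_mem] using hAF
  · rintro ⟨k, S, hS𝒜, hAS⟩
    refine ⟨Finset.univ.image S, by simpa using hS𝒜, ?_⟩
    simpa [Set.sUnion_image] using hAS

theorem analyticSet_setOf_subset_finite_union {X : Type*} [Countable X] {𝒜 : Set (Set X)}
    (h𝒜 : AnalyticSet {s : X → Bool | toSet s ∈ 𝒜}) :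
    AnalyticSet {f : X → Bool | ∃ F : Finset (Set X), (∀ S ∈ F, S ∈ 𝒜) ∧ toSet f ⊆ ⋃₀ ↑F} := by
  have hcover : {f : X → Bool | ∃ F : Finset (Set X), (∀ S ∈ F, S ∈ 𝒜) ∧ toSet f ⊆ ⋃₀ ↑F} =
      ⋃ k : ℕ, Prod.fst '' ((⋂ i : Fin k, (fun p : (X → Bool) × (Fin k → X → Bool) => p.2 i) ⁻¹'
        {s | toSet s ∈ 𝒜}) ∩ {p | ∀ x, p.1 x = true → ∃ i, p.2 i x = true}) := by
    ext f
    simp only [Set.mem_ofPred_eq, exists_finset_cover_iff_exists_fin_cover,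
      (Function.Surjective.comp_left toSet_surjective).exists, Set.mem_iUnion]
    simp [Set.subset_def]
  rw [hcover]
  refine AnalyticSet.iUnion fun k => (AnalyticSet.inter ?_ ?_).image_of_continuous continuous_fst
  · exact AnalyticSet.iInter_of_polishSpace fun i =>
      h𝒜.preimage ((continuous_apply i).comp continuous_snd)
  · refine MeasurableSet.analyticSet (Measurable.setOf ?_)
    fun_prop

def annuliMet (α : ℕ → ℝ) (S : Set Q01) (x : ℝ) : Set ℕ :=
  {n | ∃ q ∈ S, α (n + 1) ≤ |qr q - x| ∧ |qr q - x| < α n}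

theorem convTo_iff_forall_nat {S : Set Q01} {x : ℝ} :
    ConvTo S x ↔ ∀ m : ℕ, {q ∈ S | 1 / (m + 1 : ℝ) ≤ |qr q - x|}.Finite := by
  refine ⟨fun h m => h _ (by positivity), fun h ε hε => ?_⟩
  obtain ⟨m, hm⟩ := exists_nat_one_div_lt hε
  exact (h m).subset fun q hq => ⟨hq.1, hm.le.trans hq.2⟩

theorem measurable_convTo : Measurable fun p : (Q01 → Bool) × ℝ => ConvTo (toSet p.1) p.2 := by
  simp_rw [convTo_iff_forall_nat, mem_toSet]
  refine Measurable.forall fun m => Measurable.setOf_finite fun q => ?_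
  fun_prop

theorem measurable_annuliMet (α : ℕ → ℝ) :
    Measurable fun p : (Q01 → Bool) × ℝ => annuliMet α (toSet p.1) p.2 := by
  refine measurable_set_iff.2 fun n => Measurable.exists fun q => ?_
  simp only [mem_toSet]
  fun_prop

theorem analyticSet_setOf_iQuick {I : Set (Set ℕ)} (hIa : AnalyticSet {f : ℕ → Bool | toSet f ∈ I})
    (α : ℕ → ℝ) : AnalyticSet {s : Q01 → Bool | IQuick I α (toSet s)} := by
  classical
  have hquick : {s : Q01 → Bool | IQuick I α (toSet s)} =
      Prod.fst '' ({p : (Q01 → Bool) × ℝ | p.2 ∈ Set.Icc 0 1 ∧ ConvTo (toSet p.1) p.2} ∩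
        (fun p n => decide (n ∈ annuliMet α (toSet p.1) p.2)) ⁻¹' {f | toSet f ∈ I}) := by
    ext s
    simp only [Set.mem_image, Set.mem_inter_iff, Set.mem_preimage, Set.mem_ofPred_eq,
      toSet_decide_mem, Prod.exists]
    constructor
    · rintro ⟨x, hx, hconv, hI⟩
      exact ⟨s, x, ⟨⟨hx, hconv⟩, hI⟩, rfl⟩
    · rintro ⟨_, x, ⟨⟨hx, hconv⟩, hI⟩, rfl⟩
      exact ⟨x, hx, hconv, hI⟩
  rw [hquick]
  refine (AnalyticSet.inter ?_ ?_).image_of_continuous continuous_fst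
  · exact ((measurableSet_Icc.preimage measurable_snd).inter measurable_convTo.setOf).analyticSet
  · exact hIa.preimage_of_measurable (measurable_decide_mem.comp (measurable_annuliMet α))

theorem convQI_analytic_general (I : Set (Set ℕ))
    (hIa : MeasureTheory.AnalyticSet {f : ℕ → Bool | toSet f ∈ I})
    (α : ℕ → ℝ) :
    MeasureTheory.AnalyticSet {f : Q01 → Bool | toSet f ∈ convQI I α} :=
  analyticSet_setOf_subset_finite_union (analyticSet_setOf_iQuick hIa α)

theorem convQI_analytic (I : Set (Set ℕ)) (hI : IsIdeal I)
    (hIa : MeasureTheory.AnalyticSet {f : ℕ → Bool | toSet f ∈ I})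
    (α : ℕ → ℝ) (hα : memS α) :
    MeasureTheory.AnalyticSet {f : Q01 → Bool | toSet f ∈ convQI I α} :=
  convQI_analytic_general I hIa α
end

section
/- Let I be an ideal on ℕ and (α_n) a strictly decreasing sequence in (0,1/2] converging to 0. If conv(I,(α_n)) can be extended to a P⁺-ideal on [0,1]∩ℚ, then I can be extended to a P⁺-ideal on ℕ. -/
open Filter Topology Set

-- bisection
open scoped Classical in
noncomputable def bisect (J : Set (Set Q01)) : ℕ → ℝ × ℝ
  | 0 => (0, 1)
  | n + 1 =>
      let p := bisect J n
      if {q : Q01 | p.1 ≤ qr q ∧ qr q ≤ (p.1 + p.2) / 2} ∉ J then (p.1, (p.1 + p.2) / 2)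
      else ((p.1 + p.2) / 2, p.2)

lemma bisect_len (J : Set (Set Q01)) : ∀ n, (bisect J n).2 - (bisect J n).1 = (1/2 : ℝ) ^ n := by
  intro n
  induction n with
  | zero => simp [bisect]
  | succ n ih =>
      rw [pow_succ]
      simp only [bisect]
      split_ifs <;> dsimp only <;> linarith

lemma bisect_le (J : Set (Set Q01)) (n : ℕ) : (bisect J n).1 ≤ (bisect J n).2 := by
  have := bisect_len J n
  have : (0:ℝ) < (1/2 : ℝ) ^ n := by positivity
  linarith [bisect_len J n]

lemma bisect_fst_mono (J : Set (Set Q01)) : Monotone fun n => (bisect J n).1 := by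
  apply monotone_nat_of_le_succ
  intro n
  have h := bisect_le J n
  simp only [bisect]
  split_ifs <;> dsimp only <;> linarith

lemma bisect_snd_anti (J : Set (Set Q01)) : Antitone fun n => (bisect J n).2 := by
  apply antitone_nat_of_succ_le
  intro n
  have h := bisect_le J n
  simp only [bisect]
  split_ifs <;> dsimp only <;> linarith

lemma bisect_pos (J : Set (Set Q01)) (hJ : IsIdeal J) (n : ℕ) :
    {q : Q01 | (bisect J n).1 ≤ qr q ∧ qr q ≤ (bisect J n).2} ∉ J := by
  obtain ⟨hdn, hun, hfin, huniv⟩ := hJ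
  induction n with
  | zero =>
      have : {q : Q01 | (bisect J 0).1 ≤ qr q ∧ qr q ≤ (bisect J 0).2} = Set.univ := by
        ext q
        simp only [bisect, Set.mem_setOf_eq, Set.mem_univ, iff_true]
        have h1 : (0:ℚ) ≤ (q:ℚ) := q.2.1
        have h2 : (q:ℚ) ≤ 1 := q.2.2
        constructor
        · show (0:ℝ) ≤ ((q:ℚ):ℝ); exact_mod_cast h1
        · show ((q:ℚ):ℝ) ≤ 1; exact_mod_cast h2
      rw [this]; exact huniv
  | succ n ih =>
      simp only [bisect]
      split_ifs with h
      · -- h : left half ∈ J ; goal about right half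
        dsimp only
        intro hright
        apply ih
        apply hdn _ (hun _ h _ hright)
        intro q hq
        rcases le_total (qr q) (((bisect J n).1 + (bisect J n).2) / 2) with hc | hc
        · exact Or.inl ⟨hq.1, hc⟩
        · exact Or.inr ⟨hc, hq.2⟩
      · exact h

lemma exists_conv_notMem (J : Set (Set Q01)) (hJ : IsIdeal J) (hP : IsPPlus J) :
    ∃ S : Set Q01, ∃ x : ℝ, S ∉ J ∧ x ∈ Set.Icc (0:ℝ) 1 ∧ ConvTo S x := by
  obtain ⟨hdn, hun, hfin, huniv⟩ := hJ
  set a : ℕ → ℝ := fun n => (bisect J n).1 with ha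
  set b : ℕ → ℝ := fun n => (bisect J n).2 with hb
  have hab : ∀ n, a n ≤ b n := bisect_le J
  have hamono : Monotone a := bisect_fst_mono J
  have hbanti : Antitone b := bisect_snd_anti J
  have hbdd : BddAbove (Set.range a) := by
    refine ⟨b 0, ?_⟩
    rintro y ⟨n, rfl⟩
    exact le_trans (hab n) (hbanti (Nat.zero_le n))
  set x := ⨆ n, a n with hx
  have hax : ∀ n, a n ≤ x := fun n => le_ciSup hbdd n
  have hxb : ∀ n, x ≤ b n := by
    intro n
    apply ciSup_le
    intro k
    calc a k ≤ a (max k n) := hamono (le_max_left _ _)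
    _ ≤ b (max k n) := hab _
    _ ≤ b n := hbanti (le_max_right _ _)
  set A : ℕ → Set Q01 := fun n => {q : Q01 | a n ≤ qr q ∧ qr q ≤ b n} with hA
  have hAdec : ∀ n, A (n+1) ⊆ A n := by
    intro n q ⟨h1, h2⟩
    exact ⟨le_trans (hamono (Nat.le_succ n)) h1, le_trans h2 (hbanti (Nat.le_succ n))⟩
  have hApos : ∀ n, A n ∉ J := fun n => bisect_pos J ⟨hdn, hun, hfin, huniv⟩ n
  obtain ⟨B, hB, hBfin⟩ := hP A hAdec hApos
  refine ⟨B, x, hB, ⟨?_, ?_⟩, ?_⟩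
  · have := hax 0; simpa [a, bisect] using this
  · have := hxb 0; simpa [b, bisect] using this
  · intro ε hε
    obtain ⟨n, hn⟩ := exists_pow_lt_of_lt_one hε (by norm_num : (1/2:ℝ) < 1)
    apply (hBfin n).subset
    rintro q ⟨hqB, hqd⟩
    refine ⟨hqB, fun hqA => ?_⟩
    have h1 : a n ≤ qr q := hqA.1
    have h2 : qr q ≤ b n := hqA.2
    have hlen : b n - a n = (1/2:ℝ)^n := bisect_len J n
    have : |qr q - x| ≤ (1/2:ℝ)^n := by
      rw [abs_le]
      constructor <;> [skip; skip] <;> (have := hax n; have := hxb n; linarith)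
    linarith [abs_nonneg (qr q - x)]


theorem extend_of_convQI_extend (I : Set (Set ℕ)) (hI : IsIdeal I)
    (α : ℕ → ℝ) (hα : memS α)
    (h : ∃ J : Set (Set Q01), IsIdeal J ∧ IsPPlus J ∧ convQI I α ⊆ J) :
    ∃ J' : Set (Set ℕ), IsIdeal J' ∧ IsPPlus J' ∧ I ⊆ J' := by
  classical
  obtain ⟨J, hJ, hP, hconv⟩ := h
  obtain ⟨hdn, hun, hfin, huniv⟩ := hJ
  obtain ⟨hαpos, hαle, hαanti, hαlim⟩ := hα
  obtain ⟨S, x, hS, hxIcc, hSconv⟩ := exists_conv_notMem J ⟨hdn, hun, hfin, huniv⟩ hP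
  set d : Q01 → ℝ := fun q => |qr q - x| with hd
  set S₀ : Set Q01 := {q ∈ S | 0 < d q ∧ d q < α 0} with hS₀
  -- the annulus index function
  have hne : ∀ q : Q01, 0 < d q → {n : ℕ | α (n + 1) ≤ d q}.Nonempty := by
    intro q hq
    obtain ⟨k, hk⟩ := (hαlim.eventually_lt_const hq).exists
    exact ⟨k, le_of_lt (lt_of_lt_of_le (hαanti (Nat.lt_succ_self k)) hk.le)⟩
  set m : Q01 → ℕ := fun q => sInf {n : ℕ | α (n + 1) ≤ d q} with hm
  have hm1 : ∀ q ∈ S₀, α (m q + 1) ≤ d q := by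
    intro q hq
    exact Nat.sInf_mem (hne q hq.2.1)
  have hm2 : ∀ q ∈ S₀, d q < α (m q) := by
    intro q hq
    rcases Nat.eq_zero_or_pos (m q) with h0 | h0
    · rw [h0]; exact hq.2.2
    · have hnot : m q - 1 ∉ {n : ℕ | α (n + 1) ≤ d q} := by
        apply Nat.notMem_of_lt_sInf
        show m q - 1 < m q
        omega
      simp only [Set.mem_setOf_eq, not_le] at hnot
      have he : m q - 1 + 1 = m q := by omega
      rwa [he] at hnot
  set T : Set ℕ → Set Q01 := fun A => {q ∈ S₀ | m q ∈ A} with hT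
  have hTmono : ∀ {A B : Set ℕ}, A ⊆ B → T A ⊆ T B := by
    intro A B hAB q hq; exact ⟨hq.1, hAB hq.2⟩
  have hTS : ∀ A, T A ⊆ S := fun A q hq => hq.1.1
  -- finiteness of small pieces
  have hfibfin : ∀ n : ℕ, (T {n}).Finite := by
    intro n
    apply (hSconv (α (n+1)) (hαpos _)).subset
    rintro q ⟨hq0, hqn⟩
    refine ⟨hq0.1, ?_⟩
    have := hm1 q hq0
    simp only [Set.mem_singleton_iff] at hqn
    rw [hqn] at this
    exact this
  have hTfin : ∀ A : Set ℕ, A.Finite → (T A).Finite := by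
    intro A hA
    have : T A = ⋃ n ∈ A, T {n} := by
      ext q
      simp only [Set.mem_iUnion]
      constructor
      · rintro ⟨hq, hqA⟩; exact ⟨m q, hqA, hq, rfl⟩
      · rintro ⟨n, hn, hq, hqn⟩
        simp only [Set.mem_singleton_iff] at hqn
        exact ⟨hq, hqn ▸ hn⟩
    rw [this]
    exact hA.biUnion fun n _ => hfibfin n
  -- S \ S₀ is finite
  have hSdiff : (S \ S₀).Finite := by
    have h1 : (S \ S₀) ⊆ {q ∈ S | α 0 ≤ d q} ∪ {q | qr q = x} := by
      rintro q ⟨hqS, hq0⟩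
      by_cases hc : 0 < d q
      · left
        refine ⟨hqS, ?_⟩
        by_contra hlt
        exact hq0 ⟨hqS, hc, lt_of_not_ge hlt⟩
      · right
        have : d q = 0 := le_antisymm (le_of_not_gt hc) (abs_nonneg _)
        simpa [hd, sub_eq_zero] using this
    apply Set.Finite.subset _ h1
    apply Set.Finite.union (hSconv (α 0) (hαpos 0))
    have : {q : Q01 | qr q = x}.Subsingleton := by
      intro p hp r hr
      have : (p : ℚ) = (r : ℚ) := by
        have h2 : ((p:ℚ):ℝ) = ((r:ℚ):ℝ) := hp.trans hr.symm
        exact_mod_cast h2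
      exact Subtype.ext this
    exact this.finite
  -- T A is I-quick for A ∈ I
  have hTquick : ∀ A ∈ I, T A ∈ convQI I α := by
    intro A hA
    refine ⟨{T A}, ?_, ?_⟩
    · intro S' hS'
      simp only [Finset.mem_singleton] at hS'
      subst hS'
      refine ⟨x, hxIcc, ?_, ?_⟩
      · intro ε hε
        exact ((hSconv ε hε).subset (fun q hq => ⟨hTS A hq.1, hq.2⟩))
      · apply hI.1 A hA
        rintro n ⟨q, hqT, hq1, hq2⟩
        have e1 := hm1 q hqT.1
        have e2 := hm2 q hqT.1
        have : n = m q := by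
          by_contra hne'
          rcases Nat.lt_or_ge n (m q) with hlt | hge
          · have : α (m q) ≤ α (n + 1) := hαanti.antitone hlt
            change α (n+1) ≤ d q at hq1
            change d q < α n at hq2
            linarith
          · have hlt : m q < n := by omega
            have : α n ≤ α (m q + 1) := hαanti.antitone hlt
            change α (n+1) ≤ d q at hq1
            change d q < α n at hq2
            linarith
        rw [this]
        exact hqT.2
    · intro q hq
      simp only [Finset.coe_singleton, Set.sUnion_singleton]
      exact hq
  -- the pullback ideal
  refine ⟨{A : Set ℕ | T A ∈ J}, ⟨?_, ?_, ?_, ?_⟩, ?_, ?_⟩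
  · -- downward closed
    intro A hA B hBA
    exact hdn _ hA _ (hTmono hBA)
  · -- unions
    intro A hA B hB
    apply hdn _ (hun _ hA _ hB)
    rintro q ⟨hq0, hqm⟩
    rcases hqm with h' | h'
    · exact Or.inl ⟨hq0, h'⟩
    · exact Or.inr ⟨hq0, h'⟩
  · -- finite sets
    intro A hA
    exact hfin _ (hTfin A hA)
  · -- proper
    intro huJ
    apply hS
    have hTuniv : T Set.univ = S₀ := by
      ext q; exact ⟨fun hh => hh.1, fun hh => ⟨hh, trivial⟩⟩
    have huJ : T Set.univ ∈ J := huJ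
    rw [hTuniv] at huJ
    apply hdn _ (hun _ huJ _ (hfin _ hSdiff))
    intro q hq
    by_cases hc : q ∈ S₀
    · exact Or.inl hc
    · exact Or.inr ⟨hq, hc⟩
  · -- P+
    intro A hAdec hApos
    obtain ⟨B, hB, hBfin⟩ := hP (fun n => T (A n)) (fun n => hTmono (hAdec n)) hApos
    refine ⟨m '' (B ∩ S₀), ?_, ?_⟩
    · -- not in J'
      simp only [Set.mem_setOf_eq]
      intro hTB
      apply hB
      have hsub : B ∩ S₀ ⊆ T (m '' (B ∩ S₀)) := by
        rintro q ⟨hqB, hqS₀⟩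
        exact ⟨hqS₀, ⟨q, ⟨hqB, hqS₀⟩, rfl⟩⟩
      have h1 : B ∩ S₀ ∈ J := hdn _ hTB _ hsub
      have h2 : B \ T (A 0) ∈ J := hfin _ (hBfin 0)
      apply hdn _ (hun _ h1 _ h2)
      intro q hq
      by_cases hc : q ∈ S₀
      · exact Or.inl ⟨hq, hc⟩
      · exact Or.inr ⟨hq, fun hT' => hc hT'.1⟩
    · -- almost contained
      intro n
      apply Set.Finite.subset ((hBfin n).image m)
      rintro k ⟨⟨q, ⟨hqB, hqS₀⟩, rfl⟩, hkA⟩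
      exact ⟨q, ⟨hqB, fun hT' => hkA hT'.2⟩, rfl⟩
  · -- I ⊆ J'
    intro A hA
    exact hconv (hTquick A hA)
end

section
/- Let I be an ideal on ℕ and (α_n) a strictly decreasing sequence in (0,1/2] converging to 0. If I can be extended to a P⁺-ideal on ℕ, then conv(I,(α_n)) can be extended to a P⁺-ideal on [0,1]∩ℚ. -/
open Filter Topology Set

/-!
Pick rationals `v n` strictly between `α (n+1)` and `α n`; then `v` is injective and `v n` lies in
the `n`-th shell around `0`. The image `{A | v ⁻¹' A ∈ J}` of a P⁺-ideal `J ⊇ I` is a P⁺-ideal on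
`[0,1] ∩ ℚ`. An `I`-quickly convergent set with limit `0` meets `v` only at indices of shells it
meets, a set in `I ⊆ J`; one with a positive limit meets `v`, which tends to `0`, only finitely often.
-/

section IdealMap

variable {X Y : Type*} {J : Set (Set X)}

/-- The image of a family of sets under `f`, as for `Filter.map`. -/
def idealMap (f : X → Y) (J : Set (Set X)) : Set (Set Y) := {A | f ⁻¹' A ∈ J}

theorem IsIdeal.sUnion_mem (hJ : IsIdeal J) (F : Finset (Set X)) (hF : ∀ S ∈ F, S ∈ J) :
    ⋃₀ (F : Set (Set X)) ∈ J := by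
  classical
  induction F using Finset.induction with
  | empty => simpa using hJ.2.2.1 ∅ finite_empty
  | insert S F _ ih =>
    rw [Finset.coe_insert, sUnion_insert]
    exact hJ.2.1 _ (hF S (Finset.mem_insert_self S F)) _
      (ih fun T hT => hF T (Finset.mem_insert_of_mem hT))

theorem IsIdeal.map {f : X → Y} (hf : f.Injective) (hJ : IsIdeal J) :
    IsIdeal (idealMap f J) := by
  obtain ⟨hmono, hunion, hfin, hproper⟩ := hJ
  refine ⟨fun A hA B hBA => hmono _ hA _ (preimage_mono hBA), fun A hA B hB => ?_,
    fun A hA => hfin _ (hA.preimage hf.injOn), fun h => hproper (by simpa [idealMap] using h)⟩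
  show f ⁻¹' (A ∪ B) ∈ J
  exact preimage_union ▸ hunion _ hA _ hB

theorem IsPPlus.map {f : X → Y} (hf : f.Injective) (hJ : IsPPlus J) :
    IsPPlus (idealMap f J) := by
  intro A hdec hA
  obtain ⟨B, hB, hBA⟩ := hJ (fun n => f ⁻¹' A n) (fun n => preimage_mono (hdec n)) hA
  refine ⟨f '' B, by simpa [idealMap, preimage_image_eq B hf] using hB, fun n => ?_⟩
  refine ((hBA n).image f).subset ?_
  rintro _ ⟨⟨m, hm, rfl⟩, hmA⟩
  exact ⟨m, ⟨hm, hmA⟩, rfl⟩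

end IdealMap

theorem exists_Q01_between {α : ℕ → ℝ} (hpos : ∀ n, 0 < α n) (hle : ∀ n, α n ≤ 1)
    (hanti : StrictAnti α) : ∃ v : ℕ → Q01, ∀ n, α (n + 1) < qr (v n) ∧ qr (v n) < α n := by
  have (n : ℕ) : ∃ q : Q01, α (n + 1) < qr q ∧ qr q < α n := by
    obtain ⟨q, hq₁, hq₂⟩ := exists_rat_btwn (hanti n.lt_succ_self)
    have h₀ : (0 : ℝ) ≤ q := (hpos (n + 1)).le.trans hq₁.le
    have h₁ : (q : ℝ) ≤ 1 := hq₂.le.trans (hle n)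
    exact ⟨⟨q, by exact_mod_cast h₀, by exact_mod_cast h₁⟩, hq₁, hq₂⟩
  choose v hv using this
  exact ⟨v, hv⟩

section Shells

variable {α : ℕ → ℝ} {v : ℕ → Q01} {S : Set Q01}

theorem injective_of_mem_shells (hv : ∀ n, α (n + 1) < qr (v n) ∧ qr (v n) < α n) :
    v.Injective := by
  have : StrictAnti (qr ∘ v) :=
    strictAnti_nat_of_succ_lt fun n => (hv (n + 1)).2.trans (hv n).1
  exact this.injective.of_comp

theorem preimage_subset_shells_zero (hv : ∀ n, α (n + 1) < qr (v n) ∧ qr (v n) < α n) :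
    v ⁻¹' S ⊆ {n | ∃ q ∈ S, α (n + 1) ≤ |qr q - 0| ∧ |qr q - 0| < α n} := by
  intro n hn
  have h₀ : 0 ≤ qr (v n) := by simpa [qr] using (v n).2.1
  refine ⟨v n, hn, ?_⟩
  rw [sub_zero, abs_of_nonneg h₀]
  exact ⟨(hv n).1.le, (hv n).2⟩

theorem finite_preimage_of_convTo_pos (hv : ∀ n, qr (v n) < α n) (hinj : v.Injective)
    (hα : Tendsto α atTop (𝓝 0)) {x : ℝ} (hS : ConvTo S x) (hx : 0 < x) :
    (v ⁻¹' S).Finite := by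
  have hfar : {q ∈ S | x / 2 ≤ |qr q - x|}.Finite := hS (x / 2) (half_pos hx)
  have hlarge : {n : ℕ | x / 2 ≤ α n}.Finite := by
    have : ∀ᶠ n in cofinite, α n < x / 2 := by
      rw [Nat.cofinite_eq_atTop]
      exact hα.eventually (gt_mem_nhds (half_pos hx))
    simpa only [not_lt] using eventually_cofinite.mp this
  refine ((hfar.preimage hinj.injOn).union hlarge).subset fun n hn => ?_
  by_cases hc : x / 2 ≤ |qr (v n) - x|
  · exact Or.inl ⟨hn, hc⟩
  · have := (abs_lt.mp (not_le.mp hc)).1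
    exact Or.inr (show x / 2 ≤ α n by linarith [hv n])

theorem preimage_mem_of_IQuick {I J : Set (Set ℕ)} (hJ : IsIdeal J) (hIJ : I ⊆ J)
    (hα : Tendsto α atTop (𝓝 0)) (hv : ∀ n, α (n + 1) < qr (v n) ∧ qr (v n) < α n)
    (hS : IQuick I α S) : v ⁻¹' S ∈ J := by
  obtain ⟨x, hx, hconv, hshells⟩ := hS
  rcases hx.1.eq_or_lt with rfl | hx₀
  · exact hJ.1 _ (hIJ hshells) _ (preimage_subset_shells_zero hv)
  · exact hJ.2.2.1 _ (finite_preimage_of_convTo_pos (fun n => (hv n).2)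
      (injective_of_mem_shells hv) hα hconv hx₀)

end Shells

theorem convQI_extend_of_extend_general (I : Set (Set ℕ))
    (α : ℕ → ℝ) (hα : memS α)
    (h : ∃ J : Set (Set ℕ), IsIdeal J ∧ IsPPlus J ∧ I ⊆ J) :
    ∃ J' : Set (Set Q01), IsIdeal J' ∧ IsPPlus J' ∧ convQI I α ⊆ J' := by
  obtain ⟨hpos, hle, hanti, hlim⟩ := hα
  obtain ⟨J, hJ, hJP, hIJ⟩ := h
  obtain ⟨v, hv⟩ := exists_Q01_between hpos (fun n => (hle n).trans (by norm_num)) hanti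
  have hinj := injective_of_mem_shells hv
  refine ⟨idealMap v J, hJ.map hinj, hJP.map hinj, fun A ⟨F, hF, hAF⟩ => ?_⟩
  have hFJ := (hJ.map hinj).sUnion_mem F fun S hS =>
    preimage_mem_of_IQuick hJ hIJ hlim hv (hF S hS)
  exact (hJ.map hinj).1 _ hFJ _ hAF

theorem convQI_extend_of_extend (I : Set (Set ℕ)) (hI : IsIdeal I)
    (α : ℕ → ℝ) (hα : memS α)
    (h : ∃ J : Set (Set ℕ), IsIdeal J ∧ IsPPlus J ∧ I ⊆ J) :
    ∃ J' : Set (Set Q01), IsIdeal J' ∧ IsPPlus J' ∧ convQI I α ⊆ J' :=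
  convQI_extend_of_extend_general I α hα h
end

section
/- For every ideal I on ℕ and every strictly decreasing sequence (α_n) in (0,1/2] converging to 0, the ideal conv is not below conv(I,(α_n)) in the Katětov order: conv ≰_K conv(I,(α_n)). -/
open Filter Topology Set

-- auxiliary lemmas
/-- `S` is dense in the interval `(a,b)` (as a subset of `[0,1]∩ℚ`). -/
def DenseIn (S : Set Q01) (a b : ℝ) : Prop :=
  ∀ c e : ℝ, a ≤ c → c < e → e ≤ b → ∃ p ∈ S, c < qr p ∧ qr p < e

lemma qr_injective : Function.Injective qr := by
  intro p p' h
  have : ((p : ℚ) : ℝ) = ((p' : ℚ) : ℝ) := h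
  have : (p : ℚ) = (p' : ℚ) := by exact_mod_cast this
  exact Subtype.ext this

lemma denseIn_univ : DenseIn Set.univ 0 (1/2) := by
  intro c e hc hce he
  obtain ⟨s, hs1, hs2⟩ := exists_rat_btwn hce
  have h0 : (0 : ℚ) ≤ s := by
    have : (0 : ℝ) ≤ (s : ℝ) := le_of_lt (lt_of_le_of_lt hc hs1)
    exact_mod_cast this
  have h1 : s ≤ 1 := by
    have : (s : ℝ) ≤ 1 := by
      have := lt_of_lt_of_le hs2 he
      linarith
    exact_mod_cast this
  exact ⟨⟨s, Set.mem_Icc.mpr ⟨h0, h1⟩⟩, Set.mem_univ _, hs1, hs2⟩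

lemma denseIn_split (S X : Set Q01) (a b : ℝ) (hab : a < b) (h : DenseIn S a b) :
    ∃ a' b', a ≤ a' ∧ a' < b' ∧ b' ≤ b ∧
      (DenseIn (S ∩ X) a' b' ∨ DenseIn (S \ X) a' b') := by
  by_cases hX : ∃ a' b', a ≤ a' ∧ a' < b' ∧ b' ≤ b ∧ DenseIn (S ∩ X) a' b'
  · obtain ⟨a', b', h1, h2, h3, h4⟩ := hX
    exact ⟨a', b', h1, h2, h3, Or.inl h4⟩
  · push_neg at hX
    have hnd : ¬ DenseIn (S ∩ X) a b := hX a b le_rfl hab le_rfl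
    unfold DenseIn at hnd
    push_neg at hnd
    obtain ⟨c, e, hac, hce, heb, hmiss⟩ := hnd
    refine ⟨c, e, hac, hce, heb, Or.inr ?_⟩
    intro c' e' hcc' hc'e' he'e
    obtain ⟨p, hpS, hp1, hp2⟩ := h c' e' (le_trans hac hcc') hc'e' (le_trans he'e heb)
    refine ⟨p, ⟨hpS, ?_⟩, hp1, hp2⟩
    intro hpX
    have := hmiss p ⟨hpS, hpX⟩ (lt_of_le_of_lt hcc' hp1)
    linarith [lt_of_lt_of_le hp2 he'e]

lemma denseIn_step (S X : Set Q01) (a b : ℝ) (hab : a < b) (h : DenseIn S a b) :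
    ∃ S' a' b', (S' = S ∩ X ∨ S' = S \ X) ∧ a < a' ∧ a' < b' ∧ b' < b ∧
      DenseIn S' a' b' := by
  obtain ⟨c, e, hac, hce, heb, hd⟩ := denseIn_split S X a b hab h
  set δ : ℝ := (e - c) / 3 with hδ
  have hδpos : 0 < δ := by
    rw [hδ]; linarith
  have hsmaller : ∀ T : Set Q01, DenseIn T c e → DenseIn T (c + δ) (e - δ) := by
    intro T hT c' e' h1 h2 h3
    exact hT c' e' (by linarith) h2 (by linarith)
  rcases hd with hd | hd
  · exact ⟨S ∩ X, c + δ, e - δ, Or.inl rfl, by linarith, by rw [hδ]; linarith,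
      by linarith, hsmaller _ hd⟩
  · exact ⟨S \ X, c + δ, e - δ, Or.inr rfl, by linarith, by rw [hδ]; linarith,
      by linarith, hsmaller _ hd⟩

/-- The fusion chain: a sequence of sets dense on shrinking nested intervals,
deciding each `X k` along the way. -/
lemma exists_chain (X : ℕ → Set Q01) :
    ∃ g : ℕ → Set Q01 × ℝ × ℝ,
      g 0 = (Set.univ, 0, 1/2) ∧
      ∀ k, ((g (k+1)).1 = (g k).1 ∩ X k ∨ (g (k+1)).1 = (g k).1 \ X k) ∧
        (g k).2.1 < (g (k+1)).2.1 ∧ (g (k+1)).2.1 < (g (k+1)).2.2 ∧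
        (g (k+1)).2.2 < (g k).2.2 ∧ DenseIn (g (k+1)).1 (g (k+1)).2.1 (g (k+1)).2.2 := by
  classical
  set Inv : Set Q01 × ℝ × ℝ → Prop := fun p => DenseIn p.1 p.2.1 p.2.2 ∧ p.2.1 < p.2.2
    with hInv
  have hstep : ∀ (k : ℕ) (p : Set Q01 × ℝ × ℝ), Inv p →
      ∃ p' : Set Q01 × ℝ × ℝ, Inv p' ∧ (p'.1 = p.1 ∩ X k ∨ p'.1 = p.1 \ X k) ∧
        p.2.1 < p'.2.1 ∧ p'.2.1 < p'.2.2 ∧ p'.2.2 < p.2.2 := by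
    intro k p hp
    obtain ⟨S', a', b', h1, h2, h3, h4, h5⟩ := denseIn_step p.1 (X k) p.2.1 p.2.2 hp.2 hp.1
    exact ⟨(S', a', b'), ⟨h5, h3⟩, h1, h2, h3, h4⟩
  have hinit : Inv (Set.univ, 0, 1/2) := ⟨denseIn_univ, by norm_num⟩
  let F : ℕ → {p : Set Q01 × ℝ × ℝ // Inv p} → {p : Set Q01 × ℝ × ℝ // Inv p} :=
    fun k p => ⟨(hstep k p.1 p.2).choose, (hstep k p.1 p.2).choose_spec.1⟩
  let g : ℕ → {p : Set Q01 × ℝ × ℝ // Inv p} :=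
    fun n => Nat.rec ⟨(Set.univ, 0, 1/2), hinit⟩ F n
  refine ⟨fun n => (g n).1, rfl, fun k => ?_⟩
  have hspec := (hstep k (g k).1 (g k).2).choose_spec
  exact ⟨hspec.2.1, hspec.2.2.1, hspec.2.2.2.1, hspec.2.2.2.2, hspec.1.1⟩

lemma exists_chain' (X : ℕ → Set Q01) :
    ∃ (S : ℕ → Set Q01) (a b : ℕ → ℝ),
      S 0 = Set.univ ∧ a 0 = 0 ∧ b 0 = 1/2 ∧
      ∀ k, (S (k+1) = S k ∩ X k ∨ S (k+1) = S k \ X k) ∧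
        a k < a (k+1) ∧ a (k+1) < b (k+1) ∧ b (k+1) < b k ∧
        DenseIn (S (k+1)) (a (k+1)) (b (k+1)) := by
  obtain ⟨g, hg0, hgs⟩ := exists_chain X
  refine ⟨fun k => (g k).1, fun k => (g k).2.1, fun k => (g k).2.2, ?_, ?_, ?_, fun k => ?_⟩
  · show (g 0).1 = Set.univ; rw [hg0]
  · show (g 0).2.1 = 0; rw [hg0]
  · show (g 0).2.2 = 1/2; rw [hg0]
  · exact ⟨(hgs k).1, (hgs k).2.1, (hgs k).2.2.1, (hgs k).2.2.2.1, (hgs k).2.2.2.2⟩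

theorem conv_not_katLE_convQI (I : Set (Set ℕ)) (hI : IsIdeal I)
    (α : ℕ → ℝ) (hα : memS α) :
    ¬ KatLE convIdeal (convQI I α) := by
  classical
  rintro ⟨f, hf⟩
  obtain ⟨hαpos, hαle, hαanti, hα0⟩ := hα
  obtain ⟨r, hr⟩ := exists_surjective_nat ℚ
  set X : ℕ → Set Q01 := fun m => f ⁻¹' {p : Q01 | qr p < ((r m : ℚ) : ℝ)} with hXdef
  obtain ⟨S, a, b, hS0, ha0, hb0, hgs⟩ := exists_chain' X
  have haa : ∀ k, a k < a (k+1) := fun k => (hgs k).2.1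
  have hbb : ∀ k, b (k+1) < b k := fun k => (hgs k).2.2.2.1
  have habk : ∀ k, a k < b k := by
    intro k
    cases k with
    | zero => rw [ha0, hb0]; norm_num
    | succ k => exact (hgs k).2.2.1
  have hdense : ∀ k, DenseIn (S k) (a k) (b k) := by
    intro k
    cases k with
    | zero => rw [ha0, hb0, hS0]; exact denseIn_univ
    | succ k => exact (hgs k).2.2.2.2
  have hamono : Monotone a := monotone_nat_of_le_succ fun k => (haa k).le
  have hbanti : Antitone b := antitone_nat_of_succ_le fun k => (hbb k).le
  have haltb : ∀ j k, a j < b k := by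
    intro j k
    rcases le_total j k with h | h
    · exact lt_of_le_of_lt (hamono h) (habk k)
    · exact lt_of_lt_of_le (habk j) (hbanti h)
  have hbdd : BddAbove (Set.range a) := ⟨b 0, by rintro _ ⟨j, rfl⟩; exact (haltb j 0).le⟩
  set x0 : ℝ := ⨆ j, a j with hx0def
  have hxa : ∀ k, a k < x0 := fun k => lt_of_lt_of_le (haa k) (le_ciSup hbdd (k+1))
  have hxb : ∀ k, x0 < b k := fun k =>
    lt_of_le_of_lt (ciSup_le fun j => (haltb j (k+1)).le) (hbb k)
  -- the level function K
  set K : ℕ → ℕ := fun n => ((Finset.range (n+1)).filter (fun k => x0 + α n ≤ b k)).card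
    with hKdef
  have hK1 : ∀ n k, k < K n → x0 + α n ≤ b k := by
    intro n k hk
    by_contra hcon
    push_neg at hcon
    have hsub : (Finset.range (n+1)).filter (fun k => x0 + α n ≤ b k) ⊆ Finset.range k := by
      intro j hj
      simp only [Finset.mem_filter, Finset.mem_range] at hj ⊢
      by_contra hjk
      push_neg at hjk
      have : b j ≤ b k := hbanti hjk
      linarith [hj.2]
    have hle := Finset.card_le_card hsub
    rw [Finset.card_range] at hle
    exact absurd hk (not_lt.mpr hle)
  have hK2 : ∀ M, ∃ N, ∀ n, N ≤ n → M < K n := by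
    intro M
    have hev : ∀ᶠ n in atTop, α n < b M - x0 :=
      hα0.eventually_lt_const (by linarith [hxb M])
    obtain ⟨N, hN⟩ := eventually_atTop.1 hev
    refine ⟨max N (M+1), fun n hn => ?_⟩
    have hn1 : N ≤ n := le_trans (le_max_left _ _) hn
    have hn2 : M + 1 ≤ n := le_trans (le_max_right _ _) hn
    have hsub : Finset.range (M+1) ⊆ (Finset.range (n+1)).filter (fun k => x0 + α n ≤ b k) := by
      intro j hj
      simp only [Finset.mem_range] at hj
      simp only [Finset.mem_filter, Finset.mem_range]
      refine ⟨by omega, ?_⟩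
      have h1 : α n < b M - x0 := hN n hn1
      have h2 : b M ≤ b j := hbanti (by omega)
      linarith
    have hle := Finset.card_le_card hsub
    rw [Finset.card_range] at hle
    exact hle
  have hann : ∀ k n, x0 + α n ≤ b k →
      ∃ p ∈ S k, α (n+1) ≤ |qr p - x0| ∧ |qr p - x0| < α n := by
    intro k n hkn
    have h1 : a k ≤ x0 + α (n+1) :=
      le_of_lt (lt_of_lt_of_le (hxa k) (le_add_of_nonneg_right (hαpos (n+1)).le))
    have h2 : x0 + α (n+1) < x0 + α n := by
      have := hαanti (Nat.lt_succ_self n)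
      linarith
    obtain ⟨p, hpS, hp1, hp2⟩ := hdense k (x0 + α (n+1)) (x0 + α n) h1 h2 hkn
    have hpos : 0 < qr p - x0 := by linarith [hαpos (n+1)]
    refine ⟨p, hpS, ?_, ?_⟩
    · rw [abs_of_pos hpos]; linarith
    · rw [abs_of_pos hpos]; linarith
  have hsel : ∀ n, ∃ p : Q01, 1 ≤ K n →
      p ∈ S (K n - 1) ∧ α (n+1) ≤ |qr p - x0| ∧ |qr p - x0| < α n := by
    intro n
    by_cases h1 : 1 ≤ K n
    · obtain ⟨p, hp⟩ := hann (K n - 1) n (hK1 n (K n - 1) (by omega))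
      exact ⟨p, fun _ => hp⟩
    · exact ⟨⟨(0:ℚ), Set.mem_Icc.mpr ⟨le_refl _, by norm_num⟩⟩, fun h => absurd h h1⟩
  choose u hu using hsel
  set D : Set ℕ := {n | 1 ≤ K n} with hDdef
  set A : Set Q01 := u '' D with hAdef
  have huD : ∀ n, n ∈ D →
      u n ∈ S (K n - 1) ∧ α (n+1) ≤ |qr (u n) - x0| ∧ |qr (u n) - x0| < α n :=
    fun n hn => hu n hn
  have hlt : ∀ {n m : ℕ}, n ∈ D → m ∈ D → n < m → u n ≠ u m := by
    intro n m hn hm hnm he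
    have h1 := (huD n hn).2.1
    have h2 := (huD m hm).2.2
    have h3 : α m ≤ α (n+1) := hαanti.antitone (Nat.succ_le_of_lt hnm)
    rw [he] at h1
    linarith
  have hinj : Set.InjOn u D := by
    intro n hn m hm he
    rcases lt_trichotomy n m with h | h | h
    · exact absurd he (hlt hn hm h)
    · exact h
    · exact absurd he.symm (hlt hm hn h)
  have hDcof : Dᶜ.Finite := by
    obtain ⟨N, hN⟩ := hK2 0
    refine (Set.finite_lt_nat N).subset ?_
    intro n hn
    have hn' : ¬ 1 ≤ K n := fun h => hn h
    show n < N
    by_contra h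
    push_neg at h
    exact hn' (by have := hN n h; omega)
  have hDinf : D.Infinite := by
    have := hDcof.infinite_compl
    rwa [compl_compl] at this
  have hfinK : ∀ M, {n | n ∈ D ∧ K n < M}.Finite := by
    intro M
    obtain ⟨N, hN⟩ := hK2 M
    refine (Set.finite_lt_nat N).subset ?_
    rintro n ⟨hn1, hn2⟩
    show n < N
    by_contra h
    push_neg at h
    exact absurd (hN n h) (by omega)
  -- A is positive for conv(I, α)
  have hAJ : A ∉ convQI I α := by
    rintro ⟨F, hF, hcov⟩
    have key : ∀ S' ∈ F, {n | n ∈ D ∧ u n ∈ S'} ∈ I := by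
      intro S' hS'
      obtain ⟨y, hy, hconv, hNI⟩ := hF S' hS'
      by_cases hyx : y = x0
      · refine hI.1 _ hNI _ ?_
        rintro n ⟨hn1, hn2⟩
        exact ⟨u n, hn2, by rw [hyx]; exact (huD n hn1).2.1,
          by rw [hyx]; exact (huD n hn1).2.2⟩
      · apply hI.2.2.1
        set ε : ℝ := |y - x0| / 2 with hεdef
        have hε : 0 < ε := by
          have h1 : y - x0 ≠ 0 := sub_ne_zero.mpr hyx
          have h2 := abs_pos.mpr h1
          rw [hεdef]; linarith
        have hSbad := hconv ε hε
        obtain ⟨N, hN⟩ := eventually_atTop.1 (hα0.eventually_lt_const hε)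
        have hsub : {n | n ∈ D ∧ u n ∈ S'} ⊆
            {n | n < N} ∪ {n | n ∈ D ∧ u n ∈ {p ∈ S' | ε ≤ |qr p - y|}} := by
          rintro n ⟨hn1, hn2⟩
          by_cases hnN : n < N
          · exact Or.inl hnN
          · push_neg at hnN
            refine Or.inr ⟨hn1, hn2, ?_⟩
            have h1 : |qr (u n) - x0| < α n := (huD n hn1).2.2
            have h2 : α n < ε := hN n hnN
            have h3 : |y - x0| ≤ |qr (u n) - y| + |qr (u n) - x0| := by
              calc |y - x0| = |(y - qr (u n)) + (qr (u n) - x0)| := by ring_nf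
                _ ≤ |y - qr (u n)| + |qr (u n) - x0| := abs_add_le _ _
                _ = |qr (u n) - y| + |qr (u n) - x0| := by rw [abs_sub_comm]
            have h4 : |y - x0| = 2*ε := by rw [hεdef]; ring
            linarith
        refine Set.Finite.subset (Set.Finite.union (Set.finite_lt_nat N) ?_) hsub
        refine Set.Finite.of_finite_image (hSbad.subset ?_) (hinj.mono ?_)
        · rintro _ ⟨n, ⟨hn1, hn2⟩, rfl⟩
          exact hn2
        · intro n hn; exact hn.1
    have hunion : ∀ (G : Finset (Set Q01)), (∀ S' ∈ G, {n | n ∈ D ∧ u n ∈ S'} ∈ I) →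
        {n | n ∈ D ∧ u n ∈ ⋃₀ ↑G} ∈ I := by
      intro G
      induction G using Finset.induction_on with
      | empty =>
        intro _
        apply hI.2.2.1
        refine Set.finite_empty.subset ?_
        rintro n ⟨hn1, hn2⟩
        simp at hn2
      | @insert S₀ G hS₀ ih =>
        intro h
        refine hI.1 _ (hI.2.1 _ (h S₀ (Finset.mem_insert_self _ _)) _
          (ih fun S' hS' => h S' (Finset.mem_insert_of_mem hS'))) _ ?_
        rintro n ⟨hn1, hn2⟩
        rw [Finset.coe_insert, Set.sUnion_insert] at hn2
        rcases hn2 with h2 | h2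
        · exact Or.inl ⟨hn1, h2⟩
        · exact Or.inr ⟨hn1, h2⟩
    have hDI : D ∈ I := by
      refine hI.1 _ (hunion F key) _ ?_
      intro n hn
      exact ⟨hn, hcov ⟨n, hn, rfl⟩⟩
    have huniv : (Set.univ : Set ℕ) ∈ I := by
      have := hI.2.1 _ hDI _ (hI.2.2.1 _ hDcof)
      rwa [Set.union_compl_self] at this
    exact hI.2.2.2 huniv
  -- decisions along the chain
  have hSsub : ∀ k, S (k+1) ⊆ S k := by
    intro k
    rcases (hgs k).1 with h | h
    · rw [h]; exact Set.inter_subset_left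
    · rw [h]; exact Set.diff_subset
  have hSmono : ∀ i j, i ≤ j → S j ⊆ S i := by
    intro i j hij
    induction hij with
    | refl => exact subset_rfl
    | @step m h ih => exact (hSsub m).trans ih
  have hdec : ∀ m, (∀ p ∈ S (m+1), p ∈ X m) ∨ (∀ p ∈ S (m+1), p ∉ X m) := by
    intro m
    rcases (hgs m).1 with h | h
    · left; intro p hp; rw [h] at hp; exact hp.2
    · right; intro p hp; rw [h] at hp; exact hp.2
  have hTor : ∀ m, (∀ n ∈ D, m+2 ≤ K n → u n ∈ X m) ∨
      (∀ n ∈ D, m+2 ≤ K n → u n ∉ X m) := by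
    intro m
    have hmem : ∀ n ∈ D, m+2 ≤ K n → u n ∈ S (m+1) := by
      intro n hn hKn
      exact hSmono (m+1) (K n - 1) (by omega) (huD n hn).1
    rcases hdec m with h | h
    · left; intro n hn hKn; exact h _ (hmem n hn hKn)
    · right; intro n hn hKn; exact h _ (hmem n hn hKn)
  set T : Set ℕ := {m | ∀ n ∈ D, m+2 ≤ K n → u n ∈ X m} with hTdef
  have hTnot : ∀ m, m ∉ T → ∀ n ∈ D, m+2 ≤ K n → u n ∉ X m := by
    intro m hm
    rcases hTor m with h | h
    · exact absurd h hm
    · exact h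
  have hbigD : ∀ M, ∃ n, n ∈ D ∧ M ≤ K n := by
    intro M
    obtain ⟨N, hN⟩ := hK2 M
    obtain ⟨n, hnD, hn⟩ := hDinf.exists_gt N
    exact ⟨n, hnD, (hN n hn.le).le⟩
  have hqr0 : ∀ p : Q01, 0 ≤ qr p := by
    intro p
    have h := (Set.mem_Icc.mp p.2).1
    show (0:ℝ) ≤ ((p : ℚ) : ℝ)
    exact_mod_cast h
  have hqr1 : ∀ p : Q01, qr p ≤ 1 := by
    intro p
    have h := (Set.mem_Icc.mp p.2).2
    show ((p : ℚ) : ℝ) ≤ 1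
    exact_mod_cast h
  have hXiff : ∀ m p, p ∈ X m ↔ qr (f p) < ((r m : ℚ) : ℝ) := fun m p => Iff.rfl
  have hforce : ∀ m, (1:ℝ) < ((r m : ℚ) : ℝ) → m ∈ T := by
    intro m h1m
    rcases hTor m with h | h
    · exact h
    · exfalso
      obtain ⟨n, hnD, hKn⟩ := hbigD (m+2)
      have hx := h n hnD hKn
      rw [hXiff] at hx
      push_neg at hx
      linarith [hqr1 (f (u n))]
  set SS : Set ℝ := {x | ∃ m, m ∈ T ∧ ((r m : ℚ) : ℝ) = x} with hSSdef
  have hSne : SS.Nonempty := by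
    obtain ⟨m, hm⟩ := hr 2
    refine ⟨((r m : ℚ) : ℝ), m, hforce m ?_, rfl⟩
    rw [hm]; norm_num
  have hSpos : ∀ x ∈ SS, 0 < x := by
    rintro x ⟨m, hmT, rfl⟩
    obtain ⟨n, hnD, hKn⟩ := hbigD (m+2)
    have hx := hmT n hnD hKn
    rw [hXiff] at hx
    linarith [hqr0 (f (u n))]
  have hSbdd : BddBelow SS := ⟨0, fun x hx => (hSpos x hx).le⟩
  set y0 : ℝ := sInf SS with hy0def
  have hy00 : 0 ≤ y0 := le_csInf hSne fun x hx => (hSpos x hx).le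
  have hy01 : y0 ≤ 1 := by
    by_contra h
    push_neg at h
    obtain ⟨s, hs1, hs2⟩ := exists_rat_btwn h
    obtain ⟨m, rfl⟩ := hr s
    have hmT : m ∈ T := hforce m hs1
    have hle : y0 ≤ ((r m : ℚ) : ℝ) := csInf_le hSbdd ⟨m, hmT, rfl⟩
    linarith
  have hBconv : ConvTo (f '' A) y0 := by
    intro ε hε
    obtain ⟨x1, hx1SS, hx1⟩ := exists_lt_of_csInf_lt hSne (lt_add_of_pos_right y0 hε)
    obtain ⟨m1, hm1T, hm1e⟩ := hx1SS
    obtain ⟨s, hs1, hs2⟩ := exists_rat_btwn (sub_lt_self y0 hε)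
    obtain ⟨m2, rfl⟩ := hr s
    have hm2T : m2 ∉ T := by
      intro hm
      have hle := csInf_le hSbdd ⟨m2, hm, rfl⟩
      linarith
    have hbadfin : {n | n ∈ D ∧ (K n < m1 + 2 ∨ K n < m2 + 2)}.Finite := by
      refine ((hfinK (m1+2)).union (hfinK (m2+2))).subset ?_
      rintro n ⟨hnD, h | h⟩
      · exact Or.inl ⟨hnD, h⟩
      · exact Or.inr ⟨hnD, h⟩
    refine (hbadfin.image (fun n => f (u n))).subset ?_
    rintro p ⟨hpB, hpbad⟩
    obtain ⟨w, hwA, hwp⟩ := hpB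
    obtain ⟨n, hnD, hnw⟩ := hwA
    have hup : f (u n) = p := by rw [hnw, hwp]
    refine ⟨n, ⟨hnD, ?_⟩, hup⟩
    by_contra hcon
    push_neg at hcon
    obtain ⟨h1, h2⟩ := hcon
    have hu1 : u n ∈ X m1 := hm1T n hnD h1
    have hu2 : u n ∉ X m2 := hTnot m2 hm2T n hnD h2
    rw [hXiff] at hu1 hu2
    push_neg at hu2
    have hqp : qr p = qr (f (u n)) := by rw [hup]
    have habs : |qr p - y0| < ε := by
      rw [abs_lt]
      constructor
      · rw [hqp]; linarith
      · rw [hqp]; rw [hm1e] at hu1; linarith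
    linarith
  have hBI : f '' A ∈ convIdeal := by
    refine ⟨{f '' A}, ?_, ?_⟩
    · intro S' hS'
      rw [Finset.mem_singleton] at hS'
      subst hS'
      exact ⟨y0, ⟨hy00, hy01⟩, hBconv⟩
    · simp
  obtain ⟨F0, hF0, hsub0⟩ := hf _ hBI
  exact hAJ ⟨F0, hF0, fun p hp => hsub0 (Set.subset_preimage_image f A hp)⟩
end

section
/- Let J be an ideal on [0,1]∩ℚ such that for some countable family {X_n : n ∈ ℕ} of infinite subsets of [0,1]∩ℚ, every A ∉ J is split by some X_n (both A ∩ X_n and A \ X_n infinite). Then conv ≤_K J, and conversely if conv ≤_K J such a countable splitting family exists. -/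
open Filter Topology Set

/-!
A `conv`-positive set is split by some rational half-line `{q | q < t}`: a set split by none of
them converges to the supremum of the `t` below which it has only finitely many points. Pulling
these countably many half-lines back along a Katětov reduction `f` splits every `J`-positive set.

Conversely, code `a` by the point of the Cantor set with digits `n ↦ [a ∈ X n]` and let `f a` be a
rational approximating that point, with errors tending to zero and `f` finite-to-one. If the
`f`-preimage of a convergent set were `J`-positive, some `X n` would split it, and its limit would
lie in both of the disjoint closed halves of the Cantor set cut out by the `n`-th digit.
-/

def Splits {α : Type*} (Y A : Set α) : Prop :=
  (A ∩ Y).Infinite ∧ (A \ Y).Infinite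

theorem Splits.preimage {α β : Type*} {f : α → β} {Y : Set β} {A : Set α}
    (h : Splits Y (f '' A)) : Splits (f ⁻¹' Y) A := by
  rw [Splits, ← image_inter_preimage, ← image_sdiff_preimage] at h
  exact ⟨h.1.of_image f, h.2.of_image f⟩

theorem exists_infinite_splitting {α : Type*} [Infinite α] {J : Set (Set α)} {X : ℕ → Set α}
    (hX : ∀ A ∉ J, ∃ n, Splits (X n) A) :
    ∃ Y : ℕ → Set α, (∀ n, (Y n).Infinite) ∧ ∀ A ∉ J, ∃ n, Splits (Y n) A := by
  classical
  refine ⟨fun n => if (X n).Infinite then X n else univ, fun n => ?_, fun A hA => ?_⟩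
  · dsimp only
    split_ifs with h
    exacts [h, infinite_univ]
  · obtain ⟨n, hn⟩ := hX A hA
    exact ⟨n, by dsimp only; rwa [if_pos (hn.1.mono inter_subset_right)]⟩

theorem IsIdeal.biUnion_mem {α β : Type*} {J : Set (Set α)} (hJ : IsIdeal J) (F : Finset β)
    {g : β → Set α} (hg : ∀ b ∈ F, g b ∈ J) : (⋃ b ∈ F, g b) ∈ J := by
  classical
  induction F using Finset.induction_on with
  | empty => simpa using hJ.2.2.1 ∅ finite_empty
  | insert b F _ ih =>
    rw [Finset.set_biUnion_insert]
    exact hJ.2.1 _ (hg b (Finset.mem_insert_self b F)) _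
      (ih fun c hc => hg c (Finset.mem_insert_of_mem hc))

instance : Infinite Q01 := (Icc_infinite zero_lt_one).to_subtype

theorem qr_mem_Icc (q : Q01) : qr q ∈ Icc (0 : ℝ) 1 :=
  ⟨by unfold qr; exact_mod_cast q.2.1, by unfold qr; exact_mod_cast q.2.2⟩

theorem infinite_setOf_abs_qr_sub_lt {x δ : ℝ} (hx : x ∈ Icc (0 : ℝ) 1) (hδ : 0 < δ) :
    {q : Q01 | |qr q - x| < δ}.Infinite := by
  obtain ⟨a, hxa, hab⟩ := exists_rat_btwn
    (show max 0 (x - δ) < min 1 (x + δ) by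
      simp only [max_lt_iff, lt_min_iff]
      refine ⟨⟨?_, ?_⟩, ?_, ?_⟩ <;> linarith [hx.1, hx.2])
  obtain ⟨b, hab, hb⟩ := exists_rat_btwn hab
  simp only [max_lt_iff, lt_min_iff] at hxa hb
  refine Infinite.of_image Subtype.val ((Ioo_infinite (by exact_mod_cast hab : a < b)).mono ?_)
  rintro r ⟨har, hrb⟩
  have har' : (a : ℝ) < r := by exact_mod_cast har
  have hrb' : (r : ℝ) < b := by exact_mod_cast hrb
  refine ⟨⟨r, ?_, ?_⟩, ?_, rfl⟩
  · exact_mod_cast (hxa.1.trans har').le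
  · exact_mod_cast (hrb'.trans hb.1).le
  · show |(r : ℝ) - x| < δ
    rw [abs_sub_lt_iff]
    constructor <;> linarith

theorem ConvTo.tendsto {S : Set Q01} {x : ℝ} (h : ConvTo S x) :
    Tendsto qr (cofinite ⊓ 𝓟 S) (𝓝 x) := by
  refine Metric.tendsto_nhds.2 fun ε hε => eventually_inf_principal.2 ?_
  refine eventually_cofinite.2 ((h ε hε).subset fun q hq => ?_)
  obtain ⟨hqS, hqε⟩ := Classical.not_imp.1 hq
  exact ⟨hqS, by rwa [not_lt, Real.dist_eq] at hqε⟩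

theorem mem_convIdeal_of_convTo {S : Set Q01} {x : ℝ} (hx : x ∈ Icc (0 : ℝ) 1)
    (h : ConvTo S x) : S ∈ convIdeal :=
  ⟨{S}, by simpa using ⟨x, hx, h⟩, by simp⟩

theorem exists_convTo_of_forall_not_splits {B : Set Q01} (hB : B.Infinite)
    (h : ∀ t : ℚ, ¬Splits {q | qr q < t} B) : ∃ x ∈ Icc (0 : ℝ) 1, ConvTo B x := by
  set L := {t : ℝ | {q ∈ B | qr q < t}.Finite}
  have hL0 : (0 : ℝ) ∈ L :=
    finite_empty.subset fun q hq => ((qr_mem_Icc q).1.not_gt hq.2).elim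
  have hL1 : ∀ t ∈ L, t ≤ 1 := fun t ht => not_lt.1 fun h1 =>
    hB (ht.subset fun q hq => ⟨hq, (qr_mem_Icc q).2.trans_lt h1⟩)
  have hbdd : BddAbove L := ⟨1, hL1⟩
  refine ⟨sSup L, ⟨le_csSup hbdd hL0, csSup_le ⟨0, hL0⟩ hL1⟩, fun ε hε => ?_⟩
  obtain ⟨t, htL, ht⟩ := exists_lt_of_lt_csSup ⟨0, hL0⟩ (sub_lt_self (sSup L) hε)
  obtain ⟨s, hs, hsε⟩ := exists_rat_btwn (lt_add_of_pos_right (sSup L) hε)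
  have hsL : (s : ℝ) ∉ L := fun hsL => (le_csSup hbdd hsL).not_gt hs
  have hupper : {q ∈ B | (s : ℝ) ≤ qr q}.Finite := by
    by_contra hinf
    exact h s ⟨hsL, fun hfin => hinf (hfin.subset fun q ⟨hqB, hq⟩ => ⟨hqB, not_lt.2 hq⟩)⟩
  refine (htL.union hupper).subset fun q ⟨hqB, hq⟩ => ?_
  rcases le_abs'.1 hq with hlo | hhi
  · exact Or.inl ⟨hqB, by linarith⟩
  · exact Or.inr ⟨hqB, by linarith⟩

theorem exists_splits_of_notMem_convIdeal {B : Set Q01} (hB : B ∉ convIdeal) :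
    ∃ t : ℚ, Splits {q | qr q < t} B := by
  by_contra! h
  have hinf : B.Infinite := fun hfin =>
    hB (mem_convIdeal_of_convTo (x := 0) ⟨le_rfl, zero_le_one⟩
      fun _ _ => hfin.subset (sep_subset _ _))
  obtain ⟨x, hx, hconv⟩ := exists_convTo_of_forall_not_splits hinf h
  exact hB (mem_convIdeal_of_convTo hx hconv)

theorem exists_splitting_of_katLE {J : Set (Set Q01)} (hJ : IsIdeal J) (h : KatLE convIdeal J) :
    ∃ X : ℕ → Set Q01, ∀ A ∉ J, ∃ n, Splits (X n) A := by
  obtain ⟨f, hf⟩ := h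
  obtain ⟨t, ht⟩ := exists_surjective_nat ℚ
  refine ⟨fun n => f ⁻¹' {q | qr q < t n}, fun A hA => ?_⟩
  have hfA : f '' A ∉ convIdeal := fun hfA =>
    hA (hJ.1 _ (hf _ hfA) A (subset_preimage_image f A))
  obtain ⟨s, hs⟩ := exists_splits_of_notMem_convIdeal hfA
  obtain ⟨n, rfl⟩ := ht s
  exact ⟨n, hs.preimage⟩

theorem exists_tendsto_cofinite_tendsto_qr_sub {α : Type*} [Countable α] {ρ : α → ℝ}
    (hρ : ∀ a, ρ a ∈ Icc (0 : ℝ) 1) :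
    ∃ f : α → Q01, Tendsto f cofinite cofinite ∧
      Tendsto (fun a => qr (f a) - ρ a) cofinite (𝓝 0) := by
  obtain ⟨e, he⟩ := Countable.exists_injective_nat α
  obtain ⟨t, ht⟩ := exists_surjective_nat Q01
  -- Avoiding `t 0, …, t (e a - 1)` makes `f` finite-to-one.
  have hchoice : ∀ a, ∃ q : Q01,
      q ∉ (Finset.range (e a)).image t ∧ |qr q - ρ a| < 1 / ((e a : ℝ) + 1) := fun a =>
    ((infinite_setOf_abs_qr_sub_lt (hρ a) Nat.one_div_pos_of_nat).exists_notMem_finset _).imp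
      fun _ hq => ⟨hq.2, hq.1⟩
  choose f hfavoid hfclose using hchoice
  refine ⟨f, Tendsto.cofinite_of_finite_preimage_singleton fun q => ?_, ?_⟩
  · obtain ⟨m, rfl⟩ := ht q
    refine (((finite_Iic m).preimage he.injOn).subset fun a ha => ?_).to_subtype
    by_contra hma
    exact hfavoid a (Finset.mem_image.2 ⟨m, Finset.mem_range.2 (not_le.1 hma), ha.symm⟩)
  · have htol : Tendsto (fun a => 1 / ((e a : ℝ) + 1)) cofinite (𝓝 0) :=
      tendsto_one_div_add_atTop_nhds_zero_nat.comp (Nat.cofinite_eq_atTop ▸ he.tendsto_cofinite)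
    exact squeeze_zero_norm (fun a => (hfclose a).le) htol

open scoped Classical in
noncomputable def charSeq {α : Type*} (X : ℕ → Set α) (a : α) : ℕ → Bool :=
  fun n => decide (a ∈ X n)

theorem mem_image_of_convTo {α : Type*} {ψ : (ℕ → Bool) → ℝ} (hψ : Continuous ψ)
    {c : α → ℕ → Bool} {f : α → Q01} (hf : Tendsto f cofinite cofinite)
    (hfψ : Tendsto (fun a => qr (f a) - ψ (c a)) cofinite (𝓝 0)) {S : Set Q01} {x : ℝ}
    (hS : ConvTo S x) {B : Set α} (hB : B.Infinite) (hBS : B ⊆ f ⁻¹' S)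
    {K : Set (ℕ → Bool)} (hK : IsClosed K) (hBK : ∀ a ∈ B, c a ∈ K) : x ∈ ψ '' K := by
  have := hB.cofinite_inf_principal_neBot
  have hfx : Tendsto (fun a => qr (f a)) (cofinite ⊓ 𝓟 B) (𝓝 x) :=
    hS.tendsto.comp (hf.inf (tendsto_principal_principal.2 hBS))
  have hψx : Tendsto (fun a => ψ (c a)) (cofinite ⊓ 𝓟 B) (𝓝 x) := by
    simpa using hfx.sub (hfψ.mono_left inf_le_left)
  exact (hK.isCompact.image hψ).isClosed.mem_of_tendsto hψx
    (eventually_inf_principal.2 (Eventually.of_forall fun a ha => ⟨c a, hBK a ha, rfl⟩))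

theorem preimage_mem_of_convTo {α : Type*} {J : Set (Set α)} {X : ℕ → Set α}
    (hX : ∀ A ∉ J, ∃ n, Splits (X n) A) {ψ : (ℕ → Bool) → ℝ} (hψc : Continuous ψ)
    (hψi : Function.Injective ψ) {f : α → Q01} (hf : Tendsto f cofinite cofinite)
    (hfψ : Tendsto (fun a => qr (f a) - ψ (charSeq X a)) cofinite (𝓝 0)) {S : Set Q01} {x : ℝ}
    (hS : ConvTo S x) : f ⁻¹' S ∈ J := by
  by_contra hA
  obtain ⟨n, hin, hout⟩ := hX _ hA
  have hclosed : ∀ b, IsClosed {s : ℕ → Bool | s n = b} := fun b =>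
    isClosed_eq (continuous_apply n) continuous_const
  obtain ⟨s, hs, hsx⟩ := mem_image_of_convTo hψc hf hfψ hS hin inter_subset_left
    (hclosed true) fun a ha => by simpa [charSeq] using ha.2
  obtain ⟨s', hs', hs'x⟩ := mem_image_of_convTo hψc hf hfψ hS hout sdiff_subset
    (hclosed false) fun a ha => by simpa [charSeq] using ha.2
  obtain rfl : s = s' := hψi (hsx.trans hs'x.symm)
  exact Bool.false_ne_true ((show s n = false from hs').symm.trans hs)

noncomputable def cantorEmbedding (s : ℕ → Bool) : ℝ :=
  cantorSetHomeomorphNatToBool.symm s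

theorem continuous_cantorEmbedding : Continuous cantorEmbedding :=
  continuous_subtype_val.comp cantorSetHomeomorphNatToBool.symm.continuous

theorem cantorEmbedding_injective : Function.Injective cantorEmbedding :=
  Subtype.val_injective.comp cantorSetHomeomorphNatToBool.symm.injective

theorem cantorEmbedding_mem_Icc (s : ℕ → Bool) : cantorEmbedding s ∈ Icc (0 : ℝ) 1 :=
  cantorSet_subset_unitInterval (cantorSetHomeomorphNatToBool.symm s).2

theorem katLE_convIdeal_of_splitting {J : Set (Set Q01)} (hJ : IsIdeal J) {X : ℕ → Set Q01}
    (hX : ∀ A ∉ J, ∃ n, Splits (X n) A) : KatLE convIdeal J := by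
  obtain ⟨f, hf, hfψ⟩ :=
    exists_tendsto_cofinite_tendsto_qr_sub fun q => cantorEmbedding_mem_Icc (charSeq X q)
  refine ⟨f, fun A ⟨F, hF, hAF⟩ => hJ.1 _ ?_ _ (preimage_mono hAF)⟩
  rw [preimage_sUnion]
  exact hJ.biUnion_mem F fun S hS =>
    let ⟨_, _, hS⟩ := hF S hS
    preimage_mem_of_convTo hX continuous_cantorEmbedding cantorEmbedding_injective hf hfψ hS

theorem conv_katLE_iff_splitting (J : Set (Set Q01)) (hJ : IsIdeal J) :
    KatLE convIdeal J ↔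
      ∃ X : ℕ → Set Q01, (∀ n, (X n).Infinite) ∧
        ∀ A ∉ J, ∃ n, (A ∩ X n).Infinite ∧ (A \ X n).Infinite := by
  constructor
  · intro h
    obtain ⟨X, hX⟩ := exists_splitting_of_katLE hJ h
    exact exists_infinite_splitting hX
  · rintro ⟨X, -, hX⟩
    exact katLE_convIdeal_of_splitting hJ hX
end

section
/- The ideal conv(I_d,(1/2^{n+1})) on [0,1]∩ℚ is Σ⁰₆ as a subset of the Cantor space 2^{[0,1]∩ℚ}; specifically, membership A ∈ conv(I_d,(1/2^{n+1})) is equivalent to the explicit ∃∀∃∃∀∃ formula given in Lemma 3 involving the submeasure φ. -/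
open Filter Topology Set

/-!
A set `A ⊆ [0,1] ∩ ℚ` lies in `conv(I, α)` exactly when it converges to a finite set `T` of
reals and, at every `x ∈ T`, the set of indices of the annuli `B(x, α_n) \ B(x, α_{n+1})` met
by `A` is in `I`. For `I = I_d` and `α_n = 2^{-(n+1)}`, the points of `T` may be replaced by
rational approximations `c_i` at scale `2^{-s}`: widening the annuli around `c_i` by `2^{-s}`
moves the index of each annulus `n ≤ s - 3` by at most one, and thickening a set of integers by
one preserves density zero. Conversely, the number `k` of approximating points bounds, by
pigeonhole, the number of accumulation points of `A`, and these form the set `T`. The resulting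
description `∃ k ∀ j ∃ m ∀ s ∃ (c, F)` has a closed matrix in `2^{[0,1] ∩ ℚ}`, so it is `Σ⁰₆`.
-/

lemma Finset.exists_pos_forall_lt_dist {X : Type*} [MetricSpace X] (T : Finset X) :
    ∃ ε > 0, ∀ x ∈ T, ∀ y ∈ T, x ≠ y → ε < dist x y := by
  have h : ∀ᶠ ε in 𝓝[>] (0 : ℝ), ∀ x ∈ T, ∀ y ∈ T, x ≠ y → ε < dist x y := by
    simp only [eventually_all_finset]
    intro x _ y _
    by_cases hxy : x = y
    · simp [hxy]
    · simpa [hxy] using (eventually_lt_nhds (dist_pos.2 hxy)).filter_mono nhdsWithin_le_nhds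
  exact (h.and self_mem_nhdsWithin).exists.imp fun ε h => ⟨h.2, h.1⟩

lemma Set.finite_of_forall_subset_iUnion_closedBall {X : Type*} [MetricSpace X] {T : Set X}
    {k : ℕ} (h : ∀ ε > 0, ∃ c : Fin k → X, T ⊆ ⋃ i, Metric.closedBall (c i) ε) : T.Finite := by
  by_contra hT
  obtain ⟨U, hUT, hU⟩ := Infinite.exists_subset_card_eq hT (k + 1)
  obtain ⟨ε, hε, hsep⟩ := U.exists_pos_forall_lt_dist
  obtain ⟨c, hc⟩ := h (ε / 2) (by positivity)
  choose g hg using fun x : U => mem_iUnion.1 (hc (hUT x.2))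
  obtain ⟨x, y, hxy, hg_eq⟩ := Fintype.exists_ne_map_eq_of_card_lt g (by simp [hU])
  have hx := Metric.mem_closedBall.1 (hg x)
  have hy := Metric.mem_closedBall'.1 (hg_eq ▸ hg y)
  linarith [hsep x x.2 y y.2 (Subtype.coe_ne_coe.2 hxy), dist_triangle (x : X) (c (g x)) y]

lemma isSigma0_iUnion {X : Type*} [TopologicalSpace X] {ι : Type*} [Countable ι] [Nonempty ι]
    {n : ℕ} {f : ι → Set X} (h : ∀ i, IsSigma0 (n + 1) (f i)ᶜ) :
    IsSigma0 (n + 2) (⋃ i, f i) := by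
  obtain ⟨e, he⟩ := exists_surjective_nat ι
  exact ⟨f ∘ e, fun k => h (e k), (he.iUnion_comp f).symm⟩

lemma isSigma0_compl_iInter {X : Type*} [TopologicalSpace X] {ι : Type*} [Countable ι]
    [Nonempty ι] {n : ℕ} {f : ι → Set X} (h : ∀ i, IsSigma0 (n + 1) (f i)) :
    IsSigma0 (n + 2) (⋂ i, f i)ᶜ := by
  rw [compl_iInter]
  exact isSigma0_iUnion fun i => by simpa only [compl_compl] using h i

lemma isClosed_setOf_toSet_subset {X : Type*} (S : Set X) :
    IsClosed {f : X → Bool | toSet f ⊆ S} := by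
  have : {f : X → Bool | toSet f ⊆ S} = ⋂ x, (fun f => f x) ⁻¹' {b | b = true → x ∈ S} := by
    ext f
    simp [toSet, subset_def]
  rw [this]
  exact isClosed_iInter fun x => (isClosed_discrete _).preimage (continuous_apply x)

lemma isOpen_setOf_toSet_inter_nonempty {X : Type*} (S : Set X) :
    IsOpen {f : X → Bool | (toSet f ∩ S).Nonempty} := by
  have : {f : X → Bool | (toSet f ∩ S).Nonempty} = {f | toSet f ⊆ Sᶜ}ᶜ := by
    ext f
    simp [not_subset, inter_nonempty]
  rw [this]
  exact (isClosed_setOf_toSet_subset Sᶜ).isOpen_compl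

lemma isClosed_setOf_ncard_inter_Iic_le {Y : Type*} [TopologicalSpace Y] {g : Y → Set ℕ}
    (hg : ∀ n, IsOpen {y | n ∈ g y}) (N c : ℕ) : IsClosed {y | (g y ∩ Iic N).ncard ≤ c} := by
  have hfin : ∀ y, (g y ∩ Iic N).Finite := fun y => (finite_Iic N).inter_of_right (g y)
  have : {y | (g y ∩ Iic N).ncard ≤ c}ᶜ =
      ⋃ G ∈ {G : Finset ℕ | c < G.card ∧ ↑G ⊆ Iic N}, ⋂ n ∈ G, {y | n ∈ g y} := by
    ext y
    simp only [mem_compl_iff, mem_ofPred_eq, not_le, mem_iUnion, mem_iInter, exists_prop]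
    constructor
    · intro h
      refine ⟨(hfin y).toFinset, ⟨?_, fun n hn => ?_⟩, fun n hn => ?_⟩
      · rwa [← ncard_eq_toFinset_card _ (hfin y)]
      · exact ((hfin y).mem_toFinset.1 hn).2
      · exact ((hfin y).mem_toFinset.1 hn).1
    · rintro ⟨G, ⟨hG, hGN⟩, hGy⟩
      refine hG.trans_le ?_
      rw [← ncard_coe_finset]
      exact ncard_le_ncard (fun n hn => ⟨hGy n hn, hGN hn⟩) (hfin y)
  rw [← isOpen_compl_iff, this]
  exact isOpen_biUnion fun G _ => isOpen_biInter_finset fun n _ => hg n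

noncomputable def dyadic (n : ℕ) : ℝ := 1 / 2 ^ (n + 1)

lemma dyadic_pos (n : ℕ) : 0 < dyadic n := by unfold dyadic; positivity

lemma dyadic_succ (n : ℕ) : dyadic (n + 1) = dyadic n / 2 := by
  unfold dyadic; rw [pow_succ]; ring

lemma dyadic_antitone : Antitone dyadic := fun _ _ h =>
  one_div_pow_le_one_div_pow_of_le one_le_two (by omega)

lemma tendsto_dyadic : Tendsto dyadic atTop (𝓝 0) := by
  have h := (tendsto_pow_atTop_nhds_zero_of_lt_one (r := (1 / 2 : ℝ)) (by norm_num)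
    (by norm_num)).comp (tendsto_add_atTop_nat 1)
  refine h.congr fun n => ?_
  simp [dyadic]

lemma mem_densityZero_of_ncard_le {A B : Set ℕ} (hA : A ∈ densityZero) (c d : ℕ)
    (h : ∀ n, (B ∩ Iic n).ncard ≤ c + d * (A ∩ Iic n).ncard) : B ∈ densityZero := by
  have hlim : Tendsto (fun n : ℕ => c * (1 / ((n : ℝ) + 1)) +
      d * (((A ∩ Iic n).ncard : ℝ) / (n + 1))) atTop (𝓝 0) := by
    simpa using (tendsto_one_div_add_atTop_nhds_zero_nat.const_mul (c : ℝ)).add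
      (hA.const_mul (d : ℝ))
  refine squeeze_zero (fun n => by positivity) (fun n => ?_) hlim
  rw [mul_one_div, mul_div_assoc', ← add_div]
  gcongr
  exact_mod_cast h n

lemma densityZero_union {A B : Set ℕ} (hA : A ∈ densityZero) (hB : B ∈ densityZero) :
    A ∪ B ∈ densityZero := by
  refine squeeze_zero (fun n => by positivity) (fun n => ?_) (by simpa using hA.add hB)
  rw [← add_div, union_inter_distrib_right]
  gcongr
  exact_mod_cast ncard_union_le _ _

lemma isIdeal_densityZero : IsIdeal densityZero := by
  refine ⟨fun A hA B hBA => mem_densityZero_of_ncard_le hA 0 1 fun n => ?_,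
    fun A hA B hB => densityZero_union hA hB, fun A hA => ?_, fun huniv => ?_⟩
  · simpa using ncard_le_ncard (inter_subset_inter_left _ hBA) ((finite_Iic n).inter_of_right A)
  · have hempty : (∅ : Set ℕ) ∈ densityZero := by simp [densityZero]
    exact mem_densityZero_of_ncard_le hempty A.ncard 0 fun n =>
      by simpa using ncard_le_ncard inter_subset_left hA
  · have hat_most_one : ∀ n : ℕ, ((univ ∩ Iic n).ncard : ℝ) / (n + 1) = 1 := fun n => by
      rw [univ_inter, ← Finset.coe_Iic, ncard_coe_finset, Nat.card_Iic]
      push_cast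
      exact div_self (by positivity)
    have := tendsto_nhds_unique huniv (by simp only [hat_most_one]; exact tendsto_const_nhds)
    norm_num at this

def thicken (B : Set ℕ) : Set ℕ := {n | ∃ b ∈ B, n ≤ b + 1 ∧ b ≤ n + 1}

lemma thicken_mem_densityZero {B : Set ℕ} (hB : B ∈ densityZero) :
    thicken B ∈ densityZero := by
  classical
  refine mem_densityZero_of_ncard_le hB 3 3 fun n => ?_
  set t := (Finset.range (n + 2)).filter (· ∈ B)
  have hsub : thicken B ∩ Iic n ⊆ ↑(t.biUnion fun b => Finset.Icc (b - 1) (b + 1)) := by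
    rintro x ⟨⟨b, hb, h1, h2⟩, hx⟩
    simp only [Finset.coe_biUnion, Finset.coe_filter, Finset.mem_range, mem_iUnion,
      Finset.coe_Icc, mem_Icc, t, mem_Iic] at hx ⊢
    exact ⟨b, ⟨by omega, hb⟩, by omega, by omega⟩
  have ht : t.card ≤ 1 + (B ∩ Iic n).ncard := by
    have : (↑t : Set ℕ) ⊆ insert (n + 1) (B ∩ Iic n) := by
      intro x hx
      simp only [t, Finset.mem_coe, Finset.mem_filter, Finset.mem_range] at hx
      rcases Nat.lt_or_ge x (n + 1) with h | h
      · exact mem_insert_of_mem _ ⟨hx.2, by simp only [mem_Iic]; omega⟩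
      · exact mem_insert_iff.2 (Or.inl (by omega))
    calc t.card = (↑t : Set ℕ).ncard := (ncard_coe_finset t).symm
      _ ≤ (insert (n + 1) (B ∩ Iic n)).ncard :=
          ncard_le_ncard this (((finite_Iic n).inter_of_right B).insert _)
      _ ≤ 1 + (B ∩ Iic n).ncard := (ncard_insert_le _ _).trans_eq (add_comm _ _)
  calc (thicken B ∩ Iic n).ncard ≤ (t.biUnion fun b => Finset.Icc (b - 1) (b + 1)).card := by
        rw [← ncard_coe_finset]; exact ncard_le_ncard hsub (Finset.finite_toSet _)
    _ ≤ t.card * 3 := Finset.card_biUnion_le_card_mul _ _ _ fun b _ => by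
        simp only [Nat.card_Icc]; omega
    _ ≤ 3 + 3 * (B ∩ Iic n).ncard := by omega

lemma mem_densityZero_iff_eventually {B : Set ℕ} :
    B ∈ densityZero ↔ ∀ j : ℕ, ∀ᶠ n in atTop, (B ∩ Iic n).ncard * (j + 1) ≤ n + 1 := by
  have key : ∀ (j n : ℕ), ((B ∩ Iic n).ncard : ℝ) / (n + 1) ≤ 1 / (j + 1) ↔
      (B ∩ Iic n).ncard * (j + 1) ≤ n + 1 := fun j n => by
    rw [div_le_div_iff₀ (by positivity) (by positivity), one_mul]
    exact_mod_cast Iff.rfl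
  simp only [← key]
  constructor
  · intro hB j
    exact (hB.eventually (ge_mem_nhds (by positivity : (0 : ℝ) < 1 / (j + 1))))
  · intro h
    refine tendsto_order.2 ⟨fun a ha => Eventually.of_forall fun n => ha.trans_le
      (by positivity), fun ε hε => ?_⟩
    obtain ⟨j, hj⟩ := exists_nat_one_div_lt hε
    exact (h j).mono fun n hn => hn.trans_lt hj

section Annuli

variable {I : Set (Set ℕ)} {α : ℕ → ℝ}

lemma IsIdeal.mem_of_subset (hI : IsIdeal I) {A B : Set ℕ} (hA : A ∈ I) (hBA : B ⊆ A) :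
    B ∈ I :=
  hI.1 A hA B hBA

lemma IsIdeal.union_mem (hI : IsIdeal I) {A B : Set ℕ} (hA : A ∈ I) (hB : B ∈ I) : A ∪ B ∈ I :=
  hI.2.1 A hA B hB

lemma IsIdeal.mem_of_finite (hI : IsIdeal I) {A : Set ℕ} (hA : A.Finite) : A ∈ I :=
  hI.2.2.1 A hA

lemma IsIdeal.biUnion_mem_s15 {ι : Type*} (hI : IsIdeal I) {s : Finset ι} {g : ι → Set ℕ}
    (h : ∀ i ∈ s, g i ∈ I) : (⋃ i ∈ s, g i) ∈ I := by
  classical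
  induction s using Finset.induction with
  | empty => simpa using hI.mem_of_finite finite_empty
  | insert a s _ ih =>
    rw [Finset.set_biUnion_insert]
    exact hI.union_mem (h a (Finset.mem_insert_self a s))
      (ih fun i hi => h i (Finset.mem_insert_of_mem hi))

def annuli (α : ℕ → ℝ) (S : Set Q01) (x : ℝ) : Set ℕ :=
  {n | ∃ q ∈ S, α (n + 1) ≤ |qr q - x| ∧ |qr q - x| < α n}

lemma annuli_mono {S T : Set Q01} (h : S ⊆ T) (α : ℕ → ℝ) (x : ℝ) :
    annuli α S x ⊆ annuli α T x := by
  rintro n ⟨q, hq, hqn⟩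
  exact ⟨q, h hq, hqn⟩

lemma annuli_finite_of_finite (hα : Antitone α) {S : Set Q01} (hS : S.Finite) (x : ℝ) :
    (annuli α S x).Finite := by
  have hat_most_one : ∀ r : ℝ, {n : ℕ | α (n + 1) ≤ r ∧ r < α n}.Subsingleton := by
    rintro r a ⟨ha1, ha2⟩ b ⟨hb1, hb2⟩
    by_contra hab
    rcases Nat.lt_or_gt_of_ne hab with h | h
    · exact (hb2.trans_le ((hα (Nat.succ_le_of_lt h)).trans ha1)).false
    · exact (ha2.trans_le ((hα (Nat.succ_le_of_lt h)).trans hb1)).false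
  refine (hS.biUnion fun q _ => (hat_most_one |qr q - x|).finite).subset ?_
  rintro n ⟨q, hq, hqn⟩
  exact mem_biUnion hq hqn

lemma annuli_finite_of_convTo (hα : Antitone α) (hα0 : Tendsto α atTop (𝓝 0))
    {S : Set Q01} {x y : ℝ} (hS : ConvTo S y) (hxy : x ≠ y) : (annuli α S x).Finite := by
  set d := |x - y| / 2 with hd_def
  have hd : 0 < d := by have := abs_pos.2 (sub_ne_zero.2 hxy); positivity
  have hlarge : {n | d < α n}.Finite := by
    obtain ⟨N, hN⟩ := (hα0.eventually (gt_mem_nhds hd)).exists_forall_of_atTop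
    exact (finite_Iio N).subset fun n hn => not_le.1 fun hNn => (hN n hNn).not_gt hn
  refine ((annuli_finite_of_finite hα (hS d hd) x).union hlarge).subset ?_
  rintro n ⟨q, hq, hqn⟩
  by_cases hqy : d ≤ |qr q - y|
  · exact Or.inl ⟨q, ⟨hq, hqy⟩, hqn⟩
  · have htri := abs_sub_le x (qr q) y
    rw [abs_sub_comm x (qr q)] at htri
    exact Or.inr (show d < α n by linarith [hqn.2])

def ConvToFinset (A : Set Q01) (T : Finset ℝ) : Prop :=
  ∀ ε > (0 : ℝ), {q ∈ A | ∀ x ∈ T, ε ≤ |qr q - x|}.Finite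

lemma iQuick_of_finite (hI : IsIdeal I) (hα : Antitone α) {S : Set Q01} (hS : S.Finite) :
    IQuick I α S :=
  ⟨0, left_mem_Icc.2 zero_le_one, fun _ _ => hS.subset (sep_subset _ _),
    hI.mem_of_finite (annuli_finite_of_finite hα hS 0)⟩

lemma exists_finset_of_mem_convQI (hI : IsIdeal I) (hα : Antitone α)
    (hα0 : Tendsto α atTop (𝓝 0)) {A : Set Q01} (hA : A ∈ convQI I α) :
    ∃ T : Finset ℝ, ↑T ⊆ Icc (0 : ℝ) 1 ∧ ConvToFinset A T ∧ ∀ x ∈ T, annuli α A x ∈ I := by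
  classical
  obtain ⟨F, hF, hAF⟩ := hA
  choose! x hxI hx using hF
  refine ⟨F.image x, by simpa [subset_def] using hxI, fun ε hε => ?_, fun y _ => ?_⟩
  · refine (F.finite_toSet.biUnion fun S hS => (hx S hS).1 ε hε).subset ?_
    rintro q ⟨hqA, hfar⟩
    obtain ⟨S, hS, hqS⟩ := hAF hqA
    exact mem_biUnion hS ⟨hqS, hfar _ (Finset.mem_image_of_mem x hS)⟩
  · refine hI.mem_of_subset (hI.biUnion_mem_s15 (s := F) (g := fun S => annuli α S y)
      fun S hS => ?_) ?_
    · by_cases h : y = x S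
      · exact h ▸ (hx S hS).2
      · exact hI.mem_of_finite (annuli_finite_of_convTo hα hα0 (hx S hS).1 h)
    · rintro n ⟨q, hqA, hq⟩
      obtain ⟨S, hS, hqS⟩ := hAF hqA
      exact mem_biUnion hS ⟨q, hqS, hq⟩

lemma mem_convQI_of_exists_finset (hI : IsIdeal I) (hα : Antitone α) {A : Set Q01}
    (h : ∃ T : Finset ℝ, ↑T ⊆ Icc (0 : ℝ) 1 ∧ ConvToFinset A T ∧ ∀ x ∈ T, annuli α A x ∈ I) :
    A ∈ convQI I α := by
  classical
  obtain ⟨T, hTI, hAT, hann⟩ := h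
  obtain ⟨ε, hε, hsep⟩ := T.exists_pos_forall_lt_dist
  set r := ε / 2 with hr_def
  have hr : 0 < r := by positivity
  -- `A` splits into its parts near the `2r`-separated points of `T` and a finite rest `R`.
  let S : ℝ → Set Q01 := fun x => {q ∈ A | |qr q - x| < r}
  let R : Set Q01 := {q ∈ A | ∀ x ∈ T, r ≤ |qr q - x|}
  refine ⟨insert R (T.image S), fun S' hS' => ?_, fun q hq => ?_⟩
  · rcases Finset.mem_insert.1 hS' with rfl | hS'
    · exact iQuick_of_finite hI hα (hAT r hr)
    obtain ⟨x, hx, rfl⟩ := Finset.mem_image.1 hS'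
    refine ⟨x, hTI hx, fun δ hδ => (hAT (min δ r) (lt_min hδ hr)).subset ?_,
      hI.mem_of_subset (hann x hx) (annuli_mono (sep_subset _ _) α x)⟩
    rintro q ⟨⟨hqA, hqx⟩, hδq⟩
    refine ⟨hqA, fun y hy => ?_⟩
    rcases eq_or_ne y x with rfl | hyx
    · exact (min_le_left _ _).trans hδq
    · have hxy := hsep x hx y hy hyx.symm
      have htri := abs_sub_le x (qr q) y
      rw [abs_sub_comm x (qr q), ← Real.dist_eq] at htri
      exact (min_le_right _ _).trans (by linarith)
  · by_cases hfar : ∀ x ∈ T, r ≤ |qr q - x|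
    · exact ⟨R, Finset.mem_insert_self _ _, hq, hfar⟩
    push Not at hfar
    obtain ⟨x, hx, hqx⟩ := hfar
    exact ⟨S x, Finset.mem_insert_of_mem (Finset.mem_image_of_mem S hx), hq, hqx⟩

theorem mem_convQI_iff (hI : IsIdeal I) (hα : Antitone α) (hα0 : Tendsto α atTop (𝓝 0))
    {A : Set Q01} : A ∈ convQI I α ↔
      ∃ T : Finset ℝ, ↑T ⊆ Icc (0 : ℝ) 1 ∧ ConvToFinset A T ∧ ∀ x ∈ T, annuli α A x ∈ I :=
  ⟨exists_finset_of_mem_convQI hI hα hα0, mem_convQI_of_exists_finset hI hα⟩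

end Annuli

def fatAnnuli (S : Set Q01) (y δ : ℝ) : Set ℕ :=
  {n | ∃ q ∈ S, dyadic (n + 1) ≤ |qr q - y| + δ ∧ |qr q - y| < dyadic n + δ}

lemma annuli_subset_fatAnnuli {S : Set Q01} {x y δ : ℝ} (h : |x - y| ≤ δ) :
    annuli dyadic S x ⊆ fatAnnuli S y δ := by
  rintro n ⟨q, hq, hlow, hup⟩
  have h1 := abs_sub_le (qr q) x y
  have h2 := abs_sub_le (qr q) y x
  rw [abs_sub_comm y x] at h2
  exact ⟨q, hq, by linarith, by linarith⟩

lemma mem_thicken_of_mem_fatAnnuli {S : Set Q01} {x y δ : ℝ} {n : ℕ} (hn : 0 < n)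
    (hδ : δ ≤ dyadic (n + 3)) (hxy : |x - y| ≤ δ) (hmem : n ∈ fatAnnuli S y δ) :
    n ∈ thicken (annuli dyadic S x) := by
  obtain ⟨m, rfl⟩ : ∃ m, n = m + 1 := ⟨n - 1, by omega⟩
  obtain ⟨q, hq, hlow, hup⟩ := hmem
  have := abs_sub_le (qr q) x y
  have := abs_sub_le (qr q) y x
  rw [abs_sub_comm y x] at this
  -- `dyadic (m + 3) ≤ |qr q - x| < dyadic m`, so `|qr q - x|` lies in annulus `m`, `m+1` or `m+2`.
  have := dyadic_pos m
  have := dyadic_succ m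
  have := dyadic_succ (m + 1)
  have := dyadic_succ (m + 2)
  have := dyadic_succ (m + 3)
  by_cases hr1 : dyadic (m + 2) ≤ |qr q - x|
  · by_cases hr2 : |qr q - x| < dyadic (m + 1)
    · exact ⟨m + 1, ⟨q, hq, hr1, hr2⟩, by omega, by omega⟩
    · exact ⟨m, ⟨q, hq, not_lt.1 hr2, by linarith⟩, by omega, by omega⟩
  · exact ⟨m + 2, ⟨q, hq, by linarith, not_le.1 hr1⟩, by omega, by omega⟩

def CoveredBy {k : ℕ} (A : Set Q01) (s : ℕ) (c : Fin k → ℚ) (F : Finset Q01) : Prop :=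
  ∀ q ∈ A, q ∈ F ∨ ∃ i, |qr q - c i| < dyadic s

def SparseFatAnnuli {k : ℕ} (A : Set Q01) (j m s : ℕ) (c : Fin k → ℚ) : Prop :=
  ∀ i n, m ≤ n → n + 3 ≤ s → (fatAnnuli A (c i) (dyadic s) ∩ Iic n).ncard * (j + 1) ≤ n + 1

/-- The formula of Lemma 3: `k` points `c` at scale `dyadic s`, and `m` the threshold from which
the widened annuli around them have density at most `1 / (j + 1)`. -/
def DensityFormula (A : Set Q01) : Prop :=
  ∃ k : ℕ, ∀ j : ℕ, ∃ m : ℕ, ∀ s : ℕ, ∃ (c : Fin k → ℚ) (F : Finset Q01),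
    CoveredBy A s c F ∧ SparseFatAnnuli A j m s c

lemma densityFormula_of_convToFinset {A : Set Q01} {T : Finset ℝ} (hAT : ConvToFinset A T)
    (hann : ∀ x ∈ T, annuli dyadic A x ∈ densityZero) : DensityFormula A := by
  classical
  let pt : Fin T.card → ℝ := fun i => T.equivFin.symm i
  have hpt : ∀ x ∈ T, ∃ i, pt i = x := fun x hx => ⟨T.equivFin ⟨x, hx⟩, by simp [pt]⟩
  refine ⟨T.card, fun j => ?_⟩
  have hsparse : ∀ i, insert 0 (thicken (annuli dyadic A (pt i))) ∈ densityZero := fun i => by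
    rw [insert_eq]
    exact isIdeal_densityZero.union_mem (isIdeal_densityZero.mem_of_finite (finite_singleton 0))
      (thicken_mem_densityZero (hann _ (T.equivFin.symm i).2))
  obtain ⟨m, hm⟩ := (eventually_all.2 fun i =>
    mem_densityZero_iff_eventually.1 (hsparse i) j).exists_forall_of_atTop
  refine ⟨m, fun s => ?_⟩
  have hd := dyadic_succ s
  choose c hc using fun i => exists_rat_btwn (sub_lt_self (pt i) (dyadic_pos (s + 1)))
  have hxc : ∀ i, |pt i - c i| ≤ dyadic (s + 1) := fun i => by
    rw [abs_le]; constructor <;> linarith [hc i]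
  refine ⟨c, (hAT _ (dyadic_pos (s + 1))).toFinset, fun q hq => ?_, fun i n hmn hns => ?_⟩
  · by_cases hfar : ∀ x ∈ T, dyadic (s + 1) ≤ |qr q - x|
    · exact Or.inl ((Finite.mem_toFinset _).2 ⟨hq, hfar⟩)
    push Not at hfar
    obtain ⟨x, hx, hqx⟩ := hfar
    obtain ⟨i, rfl⟩ := hpt x hx
    have := abs_sub_le (qr q) (pt i) (c i)
    exact Or.inr ⟨i, by linarith [hxc i]⟩
  · refine le_trans (Nat.mul_le_mul_right _ (ncard_le_ncard ?_
      ((finite_Iic n).inter_of_right _))) (hm n hmn i)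
    rintro n' ⟨hn', hn'n⟩
    refine ⟨?_, hn'n⟩
    rcases Nat.eq_zero_or_pos n' with rfl | hpos
    · exact mem_insert _ _
    · have := dyadic_pos s
      exact mem_insert_of_mem _ (mem_thicken_of_mem_fatAnnuli hpos
        (dyadic_antitone (by simp only [mem_Iic] at hn'n; omega)) (by linarith [hxc i]) hn')

lemma image_qr_subset_Icc (A : Set Q01) : qr '' A ⊆ Icc 0 1 := by
  rintro _ ⟨q, -, rfl⟩
  exact ⟨Rat.cast_nonneg.2 q.2.1, (Rat.cast_le (K := ℝ)).2 q.2.2 |>.trans_eq Rat.cast_one⟩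

lemma derivedSet_subset_of_coveredBy {A : Set Q01} {k s : ℕ} {c : Fin k → ℚ} {F : Finset Q01}
    (h : CoveredBy A s c F) :
    derivedSet (qr '' A) ⊆ ⋃ i, Metric.closedBall (c i : ℝ) (dyadic s) := by
  have hclosed : IsClosed (⋃ i, Metric.closedBall (c i : ℝ) (dyadic s)) :=
    isClosed_iUnion_of_finite fun i => Metric.isClosed_closedBall
  have hsub : qr '' A ⊆ qr '' ↑F ∪ ⋃ i, Metric.closedBall (c i : ℝ) (dyadic s) := by
    rintro _ ⟨q, hq, rfl⟩
    rcases h q hq with hqF | ⟨i, hi⟩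
    · exact Or.inl (mem_image_of_mem qr hqF)
    · exact Or.inr (mem_iUnion.2 ⟨i, (Real.dist_eq _ _).trans_le hi.le⟩)
  have hF : derivedSet (qr '' ↑F) = ∅ :=
    eq_empty_of_forall_notMem fun x hx => Infinite.of_accPt hx (F.finite_toSet.image qr)
  refine (derivedSet_mono _ _ hsub).trans ?_
  rw [derivedSet_union, hF, empty_union]
  exact (isClosed_iff_derivedSet_subset _).1 hclosed

lemma convToFinset_derivedSet {A : Set Q01} (hfin : (derivedSet (qr '' A)).Finite) :
    ConvToFinset A hfin.toFinset := by
  intro ε hε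
  by_contra hinf
  set R := {q ∈ A | ∀ x ∈ hfin.toFinset, ε ≤ |qr q - x|}
  obtain ⟨y, -, hy⟩ := (Infinite.image qr_injective.injOn hinf).exists_accPt_of_subset_isCompact
    isCompact_Icc (image_qr_subset_Icc R)
  have hyA : y ∈ derivedSet (qr '' A) := derivedSet_mono _ _ (image_mono (sep_subset _ _)) hy
  have hfar : qr '' R ⊆ {z | ε ≤ |z - y|} := by
    rintro _ ⟨q, ⟨-, hq⟩, rfl⟩
    exact hq y (hfin.mem_toFinset.2 hyA)
  have hclosed : IsClosed {z : ℝ | ε ≤ |z - y|} :=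
    isClosed_le continuous_const (continuous_id.sub continuous_const).abs
  have := hclosed.closure_subset_iff.2 hfar (derivedSet_subset_closure _ hy)
  rw [mem_ofPred_eq, sub_self, abs_zero] at this
  linarith

lemma annuli_mem_densityZero_of_mem_derivedSet {A : Set Q01} {k : ℕ}
    (hA : ∀ j : ℕ, ∃ m : ℕ, ∀ s : ℕ, ∃ (c : Fin k → ℚ) (F : Finset Q01),
      CoveredBy A s c F ∧ SparseFatAnnuli A j m s c)
    {x : ℝ} (hx : x ∈ derivedSet (qr '' A)) : annuli dyadic A x ∈ densityZero := by
  refine mem_densityZero_iff_eventually.2 fun j => ?_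
  obtain ⟨m, hm⟩ := hA j
  refine eventually_atTop.2 ⟨m, fun n hmn => ?_⟩
  obtain ⟨c, F, hcov, hsparse⟩ := hm (n + 3)
  obtain ⟨i, hi⟩ := mem_iUnion.1 (derivedSet_subset_of_coveredBy hcov hx)
  rw [Metric.mem_closedBall, Real.dist_eq] at hi
  exact le_trans (Nat.mul_le_mul_right _ (ncard_le_ncard
    (inter_subset_inter_left _ (annuli_subset_fatAnnuli hi)) ((finite_Iic n).inter_of_right _)))
    (hsparse i n hmn le_rfl)

lemma exists_finset_of_densityFormula {A : Set Q01} (h : DensityFormula A) :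
    ∃ T : Finset ℝ, ↑T ⊆ Icc (0 : ℝ) 1 ∧ ConvToFinset A T ∧
      ∀ x ∈ T, annuli dyadic A x ∈ densityZero := by
  obtain ⟨k, hk⟩ := h
  have hfin : (derivedSet (qr '' A)).Finite := by
    refine finite_of_forall_subset_iUnion_closedBall (k := k) fun ε hε => ?_
    obtain ⟨s, hs⟩ := (tendsto_dyadic.eventually (gt_mem_nhds hε)).exists
    obtain ⟨m, hm⟩ := hk 0
    obtain ⟨c, F, hcov, -⟩ := hm s
    exact ⟨fun i => c i, (derivedSet_subset_of_coveredBy hcov).trans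
      (iUnion_mono fun i => Metric.closedBall_subset_closedBall hs.le)⟩
  refine ⟨hfin.toFinset, ?_, convToFinset_derivedSet hfin, fun x hx =>
    annuli_mem_densityZero_of_mem_derivedSet hk (hfin.mem_toFinset.1 hx)⟩
  rw [Finite.coe_toFinset]
  exact (derivedSet_subset_closure _).trans (closure_minimal (image_qr_subset_Icc A) isClosed_Icc)

theorem mem_convQI_densityZero_iff {A : Set Q01} :
    A ∈ convQI densityZero dyadic ↔ DensityFormula A := by
  rw [mem_convQI_iff isIdeal_densityZero dyadic_antitone tendsto_dyadic]
  exact ⟨fun ⟨_, _, hAT, hann⟩ => densityFormula_of_convToFinset hAT hann,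
    exists_finset_of_densityFormula⟩

lemma isClosed_setOf_coveredBy {k : ℕ} (s : ℕ) (c : Fin k → ℚ) (F : Finset Q01) :
    IsClosed {f : Q01 → Bool | CoveredBy (toSet f) s c F} :=
  isClosed_setOf_toSet_subset {q | q ∈ F ∨ ∃ i, |qr q - c i| < dyadic s}

lemma isClosed_setOf_sparseFatAnnuli {k : ℕ} (j m s : ℕ) (c : Fin k → ℚ) :
    IsClosed {f : Q01 → Bool | SparseFatAnnuli (toSet f) j m s c} := by
  simp only [SparseFatAnnuli, ofPred_forall]
  refine isClosed_iInter fun i => isClosed_iInter fun n => isClosed_iInter fun _ =>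
    isClosed_iInter fun _ => ?_
  simp_rw [← Nat.le_div_iff_mul_le (Nat.succ_pos j)]
  exact isClosed_setOf_ncard_inter_Iic_le (fun _ => isOpen_setOf_toSet_inter_nonempty _) n _

theorem convQI_density_sigma06 :
    IsSigma0 6 {f : Q01 → Bool |
      toSet f ∈ convQI densityZero (fun n : ℕ => 1 / 2 ^ (n + 1))} := by
  have hset : {f : Q01 → Bool | toSet f ∈ convQI densityZero (fun n : ℕ => 1 / 2 ^ (n + 1))} =
      ⋃ k, ⋂ j, ⋃ m, ⋂ s, ⋃ p : (Fin k → ℚ) × Finset Q01,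
        {f | CoveredBy (toSet f) s p.1 p.2 ∧ SparseFatAnnuli (toSet f) j m s p.1} := by
    ext f
    simp only [mem_iUnion, mem_iInter, Prod.exists]
    exact mem_convQI_densityZero_iff
  rw [hset]
  exact isSigma0_iUnion fun k => isSigma0_compl_iInter fun j => isSigma0_iUnion fun m =>
    isSigma0_compl_iInter fun s => isSigma0_iUnion fun p =>
      ((isClosed_setOf_coveredBy s p.1 p.2).inter
        (isClosed_setOf_sparseFatAnnuli j m s p.1)).isOpen_compl
end

section
/- If a set A ⊆ [0,1]∩ℚ has the property that for some k, for every l there are x_0,...,x_k ∈ [0,1] with A \ ⋃_{i≤k} B(x_i, 2^{−(l+2)}) finite, then A ∈ conv, i.e., A is covered by finitely many convergent sequences. -/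
open Filter Topology Set

theorem mem_conv_of_almost_covered (A : Set Q01)
    (h : ∃ k : ℕ, ∀ l : ℕ, ∃ x : Fin (k + 1) → ℝ,
      (∀ i, x i ∈ Set.Icc (0 : ℝ) 1) ∧
      (A \ {q | ∃ i, |qr q - x i| < 1 / 2 ^ (l + 2)}).Finite) :
    A ∈ convIdeal := by
  classical
  obtain ⟨k, h⟩ := h
  choose x hx1 hx2 using h
  have hcomp : IsCompact (Set.Icc (0 : Fin (k+1) → ℝ) 1) := isCompact_Icc
  have hxmem : ∀ l, x l ∈ Set.Icc (0 : Fin (k+1) → ℝ) 1 := by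
    intro l
    rw [Set.mem_Icc]
    exact ⟨fun i => (hx1 l i).1, fun i => (hx1 l i).2⟩
  obtain ⟨y, hy, φ, hφ, hlim⟩ := hcomp.tendsto_subseq hxmem
  have hyi : ∀ i, y i ∈ Set.Icc (0:ℝ) 1 := by
    rw [Set.mem_Icc] at hy
    intro i; exact ⟨hy.1 i, hy.2 i⟩
  have hlim' : ∀ i, Tendsto (fun m => x (φ m) i) atTop (𝓝 (y i)) := by
    rw [tendsto_pi_nhds] at hlim; exact hlim
  have key : ∀ ε > (0:ℝ), {q ∈ A | ∀ i, ε ≤ |qr q - y i|}.Finite := by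
    intro ε hε
    obtain ⟨l, hl⟩ := exists_pow_lt_of_lt_one (half_pos hε)
      (by norm_num : (1:ℝ)/2 < 1)
    have hev : ∀ᶠ m in atTop, ∀ i, |x (φ m) i - y i| < ε/2 := by
      rw [eventually_all]
      intro i
      have h2 := (hlim' i)
      rw [Metric.tendsto_atTop] at h2
      obtain ⟨N, hN⟩ := h2 (ε/2) (half_pos hε)
      filter_upwards [eventually_ge_atTop N] with m hm
      simpa [Real.dist_eq] using hN m hm
    obtain ⟨m, hm1, hm2⟩ := (hev.and (eventually_ge_atTop l)).exists
    apply (hx2 (φ m)).subset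
    rintro q ⟨hqA, hq2⟩
    refine ⟨hqA, ?_⟩
    rintro ⟨i, hi⟩
    have hlm : l ≤ φ m + 2 := le_trans (le_trans hm2 hφ.le_apply) (by omega)
    have h1 : (1:ℝ)/2^(φ m + 2) ≤ ((1:ℝ)/2)^l := by
      rw [one_div_pow]
      apply one_div_le_one_div_of_le (by positivity)
      exact pow_le_pow_right₀ (by norm_num) hlm
    have hqy : |qr q - y i| < ε := by
      calc |qr q - y i| ≤ |qr q - x (φ m) i| + |x (φ m) i - y i| :=
            abs_sub_le _ _ _
        _ < ε/2 + ε/2 := add_lt_add (lt_of_lt_of_le hi (le_trans h1 hl.le)) (hm1 i)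
        _ = ε := add_halves ε
    exact absurd (hq2 i) (not_le.2 hqy)
  set S : Fin (k+1) → Set Q01 := fun i => {q ∈ A | ∀ j, |qr q - y i| ≤ |qr q - y j|}
    with hSdef
  refine ⟨Finset.image S Finset.univ, ?_, ?_⟩
  · intro T hT
    simp only [Finset.mem_image, Finset.mem_univ, true_and] at hT
    obtain ⟨i, rfl⟩ := hT
    refine ⟨y i, hyi i, ?_⟩
    intro ε hε
    apply (key ε hε).subset
    rintro q ⟨⟨hqA, hmin⟩, hqε⟩
    exact ⟨hqA, fun j => le_trans hqε (hmin j)⟩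
  · intro q hq
    obtain ⟨i, -, hi⟩ := Finset.exists_min_image Finset.univ
      (fun i => |qr q - y i|) ⟨0, Finset.mem_univ 0⟩
    refine Set.mem_sUnion.2 ⟨S i, ?_, hq, fun j => hi j (Finset.mem_univ j)⟩
    simp only [Finset.coe_image, Finset.coe_univ, Set.image_univ, Set.mem_range]
    exact ⟨i, rfl⟩
end
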